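/- arXiv:1309.4946 — 10 statements merged into one kernel-verified Lean document; each statement's English description precedes it below -/
import Mathlib

section
/- Let X be a barrelled locally convex topological vector space over ℝ and let (T_t)_{t≥0} be a strongly continuous semigroup of continuous linear operators on X. Then T is locally equicontinuous: for every t₀ > 0 the family of operators {T_s : 0 ≤ s ≤ t₀} is equicontinuous. -/
open Set

section BanachSteinhaus

variable {𝕜 E F α : Type*} [NontriviallyNormedField 𝕜]
  [AddCommGroup E] [Module 𝕜 E] [UniformSpace E] [IsUniformAddGroup E] [ContinuousSMul 𝕜 E]
  [BarrelledSpace 𝕜 E]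
  [AddCommGroup F] [Module 𝕜 F] [UniformSpace F] [IsUniformAddGroup F] [PolynormableSpace 𝕜 F]
  [TopologicalSpace α]

theorem ContinuousLinearMap.uniformEquicontinuous_of_continuousOn_of_isCompact
    {K : Set α} (hK : IsCompact K) (T : α → E →L[𝕜] F)
    (hT : ∀ x, ContinuousOn (fun a ↦ T a x) K) :
    UniformEquicontinuous (fun a : K ↦ (T a : E → F)) := by
  have : ContinuousSMul 𝕜 F := (PolynormableSpace.withSeminorms 𝕜 F).continuousSMul
  refine PolynormableSpace.banach_steinhaus (𝓕 := fun a : K ↦ T a) fun x ↦ ?_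
  have hbdd := (hK.image_of_continuousOn (hT x)).isVonNBounded 𝕜
  rwa [image_eq_range] at hbdd

end BanachSteinhaus

theorem stmt0_general {X : Type*} [AddCommGroup X] [Module ℝ X] [UniformSpace X]
    [IsUniformAddGroup X] [ContinuousSMul ℝ X] [LocallyConvexSpace ℝ X]
    [BarrelledSpace ℝ X]
    (T : ℝ → X →L[ℝ] X)
    (horbit : ∀ x : X, ContinuousOn (fun t : ℝ => T t x) (Set.Ici 0))
    (t₀ : ℝ) :
    Equicontinuous (fun s : Set.Icc (0 : ℝ) t₀ => (T s : X → X)) :=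
  (ContinuousLinearMap.uniformEquicontinuous_of_continuousOn_of_isCompact isCompact_Icc T
    fun x ↦ (horbit x).mono Icc_subset_Ici_self).equicontinuous

/-- On a barrelled locally convex space, every strongly continuous
semigroup is locally equicontinuous: for every `t₀ > 0`, the family
`{T_s : 0 ≤ s ≤ t₀}` is equicontinuous. -/
theorem stmt0 {X : Type*} [AddCommGroup X] [Module ℝ X] [UniformSpace X]
    [IsUniformAddGroup X] [ContinuousSMul ℝ X] [LocallyConvexSpace ℝ X]
    [BarrelledSpace ℝ X]
    (T : ℝ → X →L[ℝ] X)
    (hT0 : T 0 = ContinuousLinearMap.id ℝ X)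
    (hTadd : ∀ s t : ℝ, 0 ≤ s → 0 ≤ t → T (s + t) = (T s).comp (T t))
    (horbit : ∀ x : X, ContinuousOn (fun t : ℝ => T t x) (Set.Ici 0))
    (t₀ : ℝ) (ht₀ : 0 < t₀) :
    Equicontinuous (fun s : Set.Icc (0 : ℝ) t₀ => (T s : X → X)) :=
  stmt0_general T horbit t₀
end

section
/- Let X be a barrelled locally convex topological vector space over ℝ and let (T_t)_{t≥0} be a strongly continuous semigroup on X whose generator is everywhere defined, i.e., for every x ∈ X the limit lim_{h→0⁺} (T_h x − x)/h exists in X. Then the family {h⁻¹(T_h − id) : h ∈ (0,1]} is equicontinuous, and the semigroup is uniformly continuous: T_h → id uniformly on every (von Neumann) bounded subset of X as h → 0⁺. -/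
open Filter Topology Set Bornology
open scoped Uniformity Pointwise

/-! The difference quotients `h⁻¹ (T_h x - x)` are continuous in `h ∈ (0, 1]` and converge as
`h → 0⁺`, so for each `x` they form a bounded set. Banach–Steinhaus on the barrelled space `X`
turns this pointwise boundedness into equicontinuity. An equicontinuous family of linear maps
sends a bounded set `B` into a single bounded set `A`, and then `T_h x - x ∈ h • A` for
`x ∈ B`, which is uniformly small as `h → 0⁺`. -/

theorem isVonNBounded_image_Ioc_of_tendsto_nhdsGT {𝕜 E : Type*} [NormedField 𝕜]
    [AddCommGroup E] [Module 𝕜 E] [TopologicalSpace E] [IsTopologicalAddGroup E]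
    [ContinuousSMul 𝕜 E] {f : ℝ → E} {a b : ℝ} {y : E} (hf : ContinuousOn f (Ioc a b))
    (hy : Tendsto f (𝓝[>] a) (𝓝 y)) : IsVonNBounded 𝕜 (f '' Ioc a b) := by
  classical
  have hcont : ContinuousOn (Function.update f a y) (Icc a b) := by
    rw [continuousOn_update_iff, Icc_sdiff_left]
    exact ⟨hf, fun _ => hy.mono_left (nhdsWithin_mono _ Ioc_subset_Ioi_self)⟩
  refine ((isCompact_Icc.image_of_continuousOn hcont).isVonNBounded 𝕜).subset ?_
  rintro _ ⟨t, ht, rfl⟩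
  exact ⟨t, Ioc_subset_Icc_self ht, Function.update_of_ne ht.1.ne' _ _⟩

theorem EquicontinuousAt.isVonNBounded_iUnion_image {𝕜 ι E F : Type*} [NormedField 𝕜]
    [AddCommGroup E] [Module 𝕜 E] [TopologicalSpace E]
    [AddCommGroup F] [Module 𝕜 F] [UniformSpace F] [IsUniformAddGroup F]
    {S : ι → E →L[𝕜] F} (hS : EquicontinuousAt (fun i => ⇑(S i)) 0) {B : Set E}
    (hB : IsVonNBounded 𝕜 B) : IsVonNBounded 𝕜 (⋃ i, S i '' B) := by
  intro V hV
  have hVu : {p : F × F | p.2 - p.1 ∈ V} ∈ 𝓤 F := by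
    rw [uniformity_eq_comap_nhds_zero F]
    exact preimage_mem_comap hV
  set U := {x | ∀ i, S i x ∈ V}
  have hU : U ∈ 𝓝 0 := by
    filter_upwards [hS _ hVu] with x hx i
    simpa using hx i
  refine Filter.Eventually.mono (hB hU) fun c hc => iUnion_subset fun i => ?_
  calc S i '' B ⊆ S i '' (c • U) := image_mono hc
    _ = c • S i '' U := image_smul_set _ _ _
    _ ⊆ c • V := smul_set_mono (image_subset_iff.2 fun x hx => hx i)

theorem tendstoUniformlyOn_of_sub_mem_smul {𝕜 α E : Type*} [NormedField 𝕜]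
    [AddCommGroup E] [Module 𝕜 E] [UniformSpace E] [IsUniformAddGroup E]
    {l : Filter 𝕜} (hl : l ≤ 𝓝 0) {A : Set E} (hA : IsVonNBounded 𝕜 A)
    {F : 𝕜 → α → E} {f : α → E} {s : Set α} (hF : ∀ᶠ c in l, ∀ x ∈ s, F c x - f x ∈ c • A) :
    TendstoUniformlyOn F f l s := by
  intro u hu
  rw [uniformity_eq_comap_nhds_zero E] at hu
  obtain ⟨W, hW, hWu⟩ := hu
  have hAW : ∀ᶠ c in l, c • A ⊆ W :=
    hl (hA.tendsto_smallSets_nhds.eventually (eventually_smallSets_subset.2 hW))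
  filter_upwards [hF, hAW] with c hc hcW x hx
  exact hWu (hcW (hc x hx))

theorem stmt1_general {X : Type*} [AddCommGroup X] [Module ℝ X] [UniformSpace X]
    [IsUniformAddGroup X] [ContinuousSMul ℝ X] [LocallyConvexSpace ℝ X]
    [BarrelledSpace ℝ X]
    (T : ℝ → X →L[ℝ] X)
    (horbit : ∀ x : X, ContinuousOn (fun t : ℝ => T t x) (Set.Ici 0))
    (hgen : ∀ x : X, ∃ y : X,
      Tendsto (fun h : ℝ => h⁻¹ • (T h x - x)) (𝓝[>] 0) (𝓝 y)) :
    Equicontinuous (fun h : Set.Ioc (0 : ℝ) 1 => fun x : X =>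
        (h : ℝ)⁻¹ • (T h x - x)) ∧
    ∀ B : Set X, Bornology.IsVonNBounded ℝ B →
      TendstoUniformlyOn (fun (h : ℝ) (x : X) => T h x) (fun x => x) (𝓝[>] 0) B := by
  set S : Ioc (0 : ℝ) 1 → X →L[ℝ] X := fun h => (h : ℝ)⁻¹ • (T h - .id ℝ X)
  have hS : ∀ h x, S h x = (h : ℝ)⁻¹ • (T h x - x) := fun _ _ => rfl
  have hbdd : ∀ x, IsVonNBounded ℝ (range fun h => S h x) := fun x => by
    obtain ⟨y, hy⟩ := hgen x
    have hcont : ContinuousOn (fun h : ℝ => h⁻¹ • (T h x - x)) (Ioc 0 1) :=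
      (continuousOn_inv₀.mono fun h hh => hh.1.ne').smul
        (((horbit x).mono fun _ hh => hh.1.le).sub continuousOn_const)
    have hbdd := isVonNBounded_image_Ioc_of_tendsto_nhdsGT (𝕜 := ℝ) hcont hy
    rwa [image_eq_range] at hbdd
  have hequi : Equicontinuous fun h => ⇑(S h) :=
    (PolynormableSpace.banach_steinhaus hbdd).equicontinuous
  refine ⟨hequi, fun B hB => ?_⟩
  refine tendstoUniformlyOn_of_sub_mem_smul nhdsWithin_le_nhds
    ((hequi 0).isVonNBounded_iUnion_image hB) ?_
  filter_upwards [Ioc_mem_nhdsGT one_pos] with h hh x hx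
  refine ⟨S ⟨h, hh⟩ x, mem_iUnion_of_mem _ (mem_image_of_mem _ hx), ?_⟩
  show h • S ⟨h, hh⟩ x = _
  rw [hS]
  exact smul_inv_smul₀ hh.1.ne' _

/-- On a barrelled locally convex space, a strongly continuous
semigroup whose generator is everywhere defined has
`{h⁻¹(T_h − id) : h ∈ (0,1]}` equicontinuous and is uniformly continuous:
`T_h → id` uniformly on every von Neumann bounded set as `h → 0⁺`. -/
theorem stmt1 {X : Type*} [AddCommGroup X] [Module ℝ X] [UniformSpace X]
    [IsUniformAddGroup X] [ContinuousSMul ℝ X] [LocallyConvexSpace ℝ X]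
    [BarrelledSpace ℝ X]
    (T : ℝ → X →L[ℝ] X)
    (hT0 : T 0 = ContinuousLinearMap.id ℝ X)
    (hTadd : ∀ s t : ℝ, 0 ≤ s → 0 ≤ t → T (s + t) = (T s).comp (T t))
    (horbit : ∀ x : X, ContinuousOn (fun t : ℝ => T t x) (Set.Ici 0))
    (hgen : ∀ x : X, ∃ y : X,
      Tendsto (fun h : ℝ => h⁻¹ • (T h x - x)) (𝓝[>] 0) (𝓝 y)) :
    Equicontinuous (fun h : Set.Ioc (0 : ℝ) 1 => fun x : X =>
        (h : ℝ)⁻¹ • (T h x - x)) ∧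
    ∀ B : Set X, Bornology.IsVonNBounded ℝ B →
      TendstoUniformlyOn (fun (h : ℝ) (x : X) => T h x) (fun x => x) (𝓝[>] 0) B :=
  stmt1_general T horbit hgen
end

section
/- Let ω = ℝ^ℕ carry the product topology and let (T_t)_{t≥0} be a strongly continuous semigroup of continuous linear operators on ω. Then the generator of T is everywhere defined: for every x ∈ ω the limit lim_{h→0⁺} (T_ह x − x)/h = lim_{h→0⁺} h⁻¹ • (T_h x − x) exists in ω. -/
/-!
Fix a coordinate `n`. The functionals `y ↦ (T t y) n`, `0 ≤ t ≤ 1`, are pointwise bounded, so by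
Banach–Steinhaus on the Fréchet space `ω` they are equicontinuous, hence all of them vanish on the
vectors that vanish on some finite set `S ∋ n`. The vectors `x` for which `h⁻¹ ((T h x) n - x n)`
converges form a subspace `V` containing those vectors. `V` also contains every orbit integral
`∫₀ʳ T u y du`, because `T h` merely shifts its window of integration. As `r → 0⁺` the restrictions
to `S` of `r⁻¹ ∫₀ʳ T u eⱼ du`, `j ∈ S`, tend to the standard basis of `ℝ^S`, so for small `r` they
span `ℝ^S`, and then `V` is everything.
-/

open Filter Topology Set

section FiniteDependence

variable {X : Type*}

theorem exists_finset_forall_eq_zero_of_equicontinuousAt {I : Type*}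
    {φ : I → (X → ℝ) →L[ℝ] ℝ} (hφ : EquicontinuousAt (fun i => ⇑(φ i)) 0) :
    ∃ s : Finset X, ∀ i z, (∀ k ∈ s, z k = 0) → φ i z = 0 := by
  obtain ⟨N, hN, hNφ⟩ := (Metric.equicontinuousAt_iff_right.mp hφ 1 one_pos).exists_mem
  rw [nhds_pi, Filter.mem_pi] at hN
  obtain ⟨J, hJ, U, hU, hJU⟩ := hN
  refine ⟨hJ.toFinset, fun i z hz => by_contra fun hne => ?_⟩
  -- `N` only constrains the coordinates in `J`, where `z` vanishes, so it contains all multiples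
  -- of `z`, including one on which `φ i` equals `1`
  have hmem : (φ i z)⁻¹ • z ∈ N := hJU fun k hk => by
    simpa [hz k (hJ.mem_toFinset.mpr hk)] using mem_of_mem_nhds (hU k)
  simpa [inv_mul_cancel₀ hne] using hNφ _ hmem i

theorem exists_finset_forall_eq_zero_of_bddAbove [Countable X] {I : Type*}
    {φ : I → (X → ℝ) →L[ℝ] ℝ} (hφ : ∀ y, BddAbove (range fun i => ‖φ i y‖)) :
    ∃ s : Finset X, ∀ i z, (∀ k ∈ s, z k = 0) → φ i z = 0 :=
  exists_finset_forall_eq_zero_of_equicontinuousAt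
    ((WithSeminorms.banach_steinhaus (norm_withSeminorms ℝ ℝ) fun _ y => hφ y).equicontinuous 0)

theorem ContinuousLinearMap.exists_finset_forall_eq_zero (φ : (X → ℝ) →L[ℝ] ℝ) :
    ∃ s : Finset X, ∀ z, (∀ k ∈ s, z k = 0) → φ z = 0 := by
  obtain ⟨s, hs⟩ := exists_finset_forall_eq_zero_of_equicontinuousAt (φ := fun _ : Unit => φ)
    (equicontinuousAt_unique.mpr φ.continuous.continuousAt)
  exact ⟨s, hs ()⟩

theorem LinearMap.eq_sum_single_of_forall_eq_zero [DecidableEq X] (φ : (X → ℝ) →ₗ[ℝ] ℝ)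
    {s : Finset X} (hφ : ∀ z, (∀ k ∈ s, z k = 0) → φ z = 0) (z : X → ℝ) :
    φ z = ∑ k ∈ s, z k * φ (Pi.single k 1) := by
  have hrest : φ (z - ∑ k ∈ s, z k • Pi.single k 1) = 0 :=
    hφ _ fun k hk => by simp [Finset.sum_apply, Pi.single_apply, hk]
  rw [map_sub, sub_eq_zero] at hrest
  simp [hrest]

theorem ContinuousLinearMap.map_pi_intervalIntegral (φ : (X → ℝ) →L[ℝ] ℝ) {f : ℝ → X → ℝ}
    (hf : Continuous f) (a b : ℝ) :
    φ (fun k => ∫ u in a..b, f u k) = ∫ u in a..b, φ (f u) := by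
  classical
  obtain ⟨s, hs⟩ := φ.exists_finset_forall_eq_zero
  have hrep := (φ : (X → ℝ) →ₗ[ℝ] ℝ).eq_sum_single_of_forall_eq_zero hs
  simp only [ContinuousLinearMap.coe_coe] at hrep
  have hint (k : X) :
      IntervalIntegrable (fun u => f u k * φ (Pi.single k 1)) MeasureTheory.volume a b :=
    (((continuous_apply k).comp hf).mul continuous_const).intervalIntegrable a b
  rw [hrep, intervalIntegral.integral_congr fun u _ => hrep (f u),
    intervalIntegral.integral_finsetSum fun k _ => hint k]
  exact Finset.sum_congr rfl fun k _ => (intervalIntegral.integral_mul_const _ _).symm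

end FiniteDependence

def convergenceSubmodule {α R M N : Type*} [Semiring R] [AddCommMonoid M] [Module R M]
    [AddCommMonoid N] [Module R N] [TopologicalSpace N] [ContinuousAdd N]
    [ContinuousConstSMul R N] (φ : α → M →ₗ[R] N) (l : Filter α) : Submodule R M where
  carrier := {x | ∃ y, Tendsto (fun a => φ a x) l (𝓝 y)}
  zero_mem' := ⟨0, by simpa using tendsto_const_nhds⟩
  add_mem' := fun ⟨y, hy⟩ ⟨y', hy'⟩ => ⟨y + y', by simpa using hy.add hy'⟩
  smul_mem' c _ := fun ⟨y, hy⟩ => ⟨c • y, by simpa using hy.const_smul c⟩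

theorem Submodule.eq_top_of_ker_le_of_span_map_eq_top {R M N ι : Type*} [Ring R]
    [AddCommGroup M] [Module R M] [AddCommGroup N] [Module R N] {V : Submodule R M}
    {π : M →ₗ[R] N} (hker : LinearMap.ker π ≤ V) {v : ι → M} (hv : ∀ i, v i ∈ V)
    (hspan : span R (range (π ∘ v)) = ⊤) : V = ⊤ := by
  have hmap : map π V = ⊤ := by
    rw [eq_top_iff, ← hspan, range_comp, ← map_span]
    exact map_mono (span_le.mpr (range_subset_iff.mpr hv))
  rw [← sup_eq_left.mpr hker, ← comap_map_eq, hmap, comap_top]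

theorem eventually_span_range_eq_top_of_tendsto_basis {α ι 𝕜 F : Type*} [Fintype ι]
    [NontriviallyNormedField 𝕜] [CompleteSpace 𝕜] [NormedAddCommGroup F] [NormedSpace 𝕜 F]
    [FiniteDimensional 𝕜 F] (b : Module.Basis ι 𝕜 F) {v : α → ι → F} {l : Filter α}
    (hv : Tendsto v l (𝓝 ⇑b)) : ∀ᶠ a in l, Submodule.span 𝕜 (range (v a)) = ⊤ := by
  filter_upwards [hv.eventually (isOpen_setOfPred_linearIndependent.mem_nhds b.linearIndependent)]
    with a ha
  exact ha.span_eq_top_of_card_eq_finrank' (Module.finrank_eq_card_basis b).symm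

section Semigroup

variable {X : Type*}

/-- The orbit is extended to negative times by its value at `0`, which makes it continuous on `ℝ`. -/
noncomputable def orbitIntegral (T : ℝ → (X → ℝ) →L[ℝ] (X → ℝ)) (y : X → ℝ) (r : ℝ) : X → ℝ :=
  fun k => ∫ u in 0..r, T (max u 0) y k

variable {T : ℝ → (X → ℝ) →L[ℝ] (X → ℝ)}

theorem continuous_orbit_max (horbit : ∀ x, ContinuousOn (fun t : ℝ => T t x) (Ici 0))
    (y : X → ℝ) : Continuous fun u : ℝ => T (max u 0) y :=
  (horbit y).comp_continuous (continuous_id.max continuous_const) fun u => le_max_right u 0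

theorem tendsto_inv_smul_orbitIntegral (hT0 : T 0 = ContinuousLinearMap.id ℝ (X → ℝ))
    (horbit : ∀ x, ContinuousOn (fun t : ℝ => T t x) (Ici 0)) (y : X → ℝ) :
    Tendsto (fun r => r⁻¹ • orbitIntegral T y r) (𝓝[>] 0) (𝓝 y) := by
  refine tendsto_pi_nhds.mpr fun k => ?_
  have hg := (continuous_apply k).comp (continuous_orbit_max horbit y)
  have := ((hg.integral_hasStrictDerivAt 0 0).hasDerivAt).tendsto_slope_zero_right
  simpa [hT0, orbitIntegral] using this

theorem tendsto_slope_orbitIntegral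
    (hTadd : ∀ s t : ℝ, 0 ≤ s → 0 ≤ t → T (s + t) = (T s).comp (T t))
    (horbit : ∀ x, ContinuousOn (fun t : ℝ => T t x) (Ici 0)) (y : X → ℝ) (n : X)
    {r : ℝ} (hr : 0 ≤ r) :
    Tendsto (fun h => h⁻¹ * (T h (orbitIntegral T y r) n - orbitIntegral T y r n)) (𝓝[>] 0)
      (𝓝 (T r y n - T 0 y n)) := by
  set g : ℝ → ℝ := fun u => T (max u 0) y n
  have hg : Continuous g := (continuous_apply n).comp (continuous_orbit_max horbit y)
  set G : ℝ → ℝ := fun v => ∫ u in 0..v, g u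
  have hG (v : ℝ) : HasDerivAt G (g v) v := (hg.integral_hasStrictDerivAt 0 v).hasDerivAt
  have hshift : HasDerivAt (fun h => G (r + h) - G h) (g r - g 0) 0 := by
    have hGr : HasDerivAt G (g r) (r + 0) := by simpa using hG r
    exact (hGr.comp_const_add r 0).sub (hG 0)
  have hTh {h : ℝ} (hh : 0 ≤ h) : T h (orbitIntegral T y r) n = G (r + h) - G h := by
    have := ((ContinuousLinearMap.proj n).comp (T h)).map_pi_intervalIntegral
      (continuous_orbit_max horbit y) 0 r
    simp only [ContinuousLinearMap.coe_comp, Function.comp_apply,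
      ContinuousLinearMap.proj_apply] at this
    refine (this : T h (orbitIntegral T y r) n = _).trans ?_
    have hwindow : G (r + h) - G h = ∫ u in 0..r, g (u + h) := by
      rw [intervalIntegral.integral_comp_add_right, zero_add]
      exact intervalIntegral.integral_interval_sub_left (hg.intervalIntegrable _ _)
        (hg.intervalIntegrable _ _)
    rw [hwindow]
    refine intervalIntegral.integral_congr fun u hu => ?_
    have hu0 : 0 ≤ u := (uIcc_of_le hr ▸ hu).1
    show T h (T (max u 0) y) n = T (max (u + h) 0) y n
    rw [max_eq_left hu0, max_eq_left (add_nonneg hu0 hh), add_comm u h, hTadd h u hh hu0,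
      ContinuousLinearMap.comp_apply]
  have hlim : g r - g 0 = T r y n - T 0 y n := by simp [g, max_eq_left hr]
  refine hlim ▸ hshift.tendsto_slope_zero_right.congr' ?_
  filter_upwards [self_mem_nhdsWithin] with h (hh : 0 < h)
  simp [hTh hh.le, G, orbitIntegral, g]

theorem exists_finset_forall_mem_Icc_apply_eq_zero [Countable X]
    (horbit : ∀ x, ContinuousOn (fun t : ℝ => T t x) (Ici 0)) (n : X) :
    ∃ s : Finset X, ∀ t ∈ Icc (0 : ℝ) 1, ∀ z, (∀ k ∈ s, z k = 0) → T t z n = 0 := by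
  obtain ⟨s, hs⟩ := exists_finset_forall_eq_zero_of_bddAbove
    (φ := fun t : Icc (0 : ℝ) 1 => (ContinuousLinearMap.proj n).comp (T t)) fun y => by
      have hcont : ContinuousOn (fun t => ‖T t y n‖) (Icc 0 1) :=
        ((continuous_apply n).comp_continuousOn ((horbit y).mono Icc_subset_Ici_self)).norm
      refine (isCompact_Icc.bddAbove_image hcont).mono ?_
      rintro _ ⟨⟨t, ht⟩, rfl⟩
      exact ⟨t, ht, rfl⟩
  exact ⟨s, fun t ht => hs ⟨t, ht⟩⟩

theorem exists_tendsto_slope_apply [Countable X] (hT0 : T 0 = ContinuousLinearMap.id ℝ (X → ℝ))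
    (hTadd : ∀ s t : ℝ, 0 ≤ s → 0 ≤ t → T (s + t) = (T s).comp (T t))
    (horbit : ∀ x, ContinuousOn (fun t : ℝ => T t x) (Ici 0)) (x : X → ℝ) (n : X) :
    ∃ L, Tendsto (fun h => h⁻¹ * (T h x n - x n)) (𝓝[>] 0) (𝓝 L) := by
  classical
  obtain ⟨s, hs⟩ := exists_finset_forall_mem_Icc_apply_eq_zero horbit n
  let S := insert n s
  let φ (h : ℝ) : (X → ℝ) →ₗ[ℝ] ℝ :=
    h⁻¹ • ((LinearMap.proj n).comp (T h : (X → ℝ) →ₗ[ℝ] (X → ℝ)) - LinearMap.proj n)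
  let V := convergenceSubmodule φ (𝓝[>] 0)
  let π := LinearMap.funLeft ℝ ℝ ((↑) : S → X)
  have hker : LinearMap.ker π ≤ V := fun z hz => by
    have hzS (k : X) (hk : k ∈ S) : z k = 0 := congr_fun hz ⟨k, hk⟩
    refine ⟨0, tendsto_const_nhds.congr' ?_⟩
    filter_upwards [Ioc_mem_nhdsGT zero_lt_one] with h hh
    have hTh : T h z n = 0 :=
      hs h (Ioc_subset_Icc_self hh) z fun k hk => hzS k (Finset.mem_insert_of_mem hk)
    simp [φ, hTh, hzS n (Finset.mem_insert_self n s)]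
  have horbitIntegral_mem (y : X → ℝ) {r : ℝ} (hr : 0 ≤ r) : orbitIntegral T y r ∈ V :=
    ⟨_, tendsto_slope_orbitIntegral hTadd horbit y n hr⟩
  have hspan : ∀ᶠ r in 𝓝[>] 0, Submodule.span ℝ
      (range (π ∘ fun j : S => r⁻¹ • orbitIntegral T (Pi.single j 1) r)) = ⊤ := by
    refine eventually_span_range_eq_top_of_tendsto_basis (Pi.basisFun ℝ S) ?_
    refine tendsto_pi_nhds.mpr fun j => tendsto_pi_nhds.mpr fun k => ?_
    have := tendsto_pi_nhds.mp (tendsto_inv_smul_orbitIntegral hT0 horbit (Pi.single j 1)) k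
    have hbasis : Pi.basisFun ℝ S j k = (Pi.single (j : X) 1 : X → ℝ) k := by
      simp only [Pi.basisFun_apply, Pi.single_apply, Subtype.ext_iff]
    rw [hbasis]
    exact this
  obtain ⟨r, hrspan, hr⟩ := (hspan.and self_mem_nhdsWithin).exists
  have hV : V = ⊤ := Submodule.eq_top_of_ker_le_of_span_map_eq_top hker
    (fun j => V.smul_mem _ (horbitIntegral_mem _ hr.le)) hrspan
  exact (hV ▸ Submodule.mem_top : x ∈ V)

end Semigroup

/-- Every strongly continuous semigroup on `ω = ℝ^ℕ` (product
topology) has everywhere defined generator: for every `x` the limit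
`lim_{h→0⁺} h⁻¹ • (T_h x − x)` exists. -/
theorem stmt2
    (T : ℝ → (ℕ → ℝ) →L[ℝ] (ℕ → ℝ))
    (hT0 : T 0 = ContinuousLinearMap.id ℝ (ℕ → ℝ))
    (hTadd : ∀ s t : ℝ, 0 ≤ s → 0 ≤ t → T (s + t) = (T s).comp (T t))
    (horbit : ∀ x : ℕ → ℝ, ContinuousOn (fun t : ℝ => T t x) (Set.Ici 0)) :
    ∀ x : ℕ → ℝ, ∃ y : ℕ → ℝ,
      Tendsto (fun h : ℝ => h⁻¹ • (T h x - x)) (𝓝[>] 0) (𝓝 y) := by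
  intro x
  choose y hy using exists_tendsto_slope_apply hT0 hTadd horbit x
  exact ⟨y, tendsto_pi_nhds.mpr fun n => by simpa using hy n⟩
end

section
/- Let ω = ℝ^ℕ carry the product topology, let (T_t)_{t≥0} be a strongly continuous semigroup of continuous linear operators on ω, and let A be its generator (which is an everywhere defined continuous linear operator). Then for every x ∈ ω and every t ≥ 0 the exponential series converges in ω and represents the semigroup: T_t x = ∑_{k=0}^∞ (t^k / k!) • A^k x. -/
/-
By the uniform boundedness principle on the Fréchet space `ω`, the coordinate functionals
`x ↦ (T_s x)_n`, `0 ≤ s ≤ b`, all depend only on the first `m` coordinates of `x`, for a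
single `m`. Since `(T_s A y)_n` is the right derivative of `s ↦ (T_s y)_n`, the same holds for
`x ↦ (T_s A^k x)_n` for every `k`. With `M` the upper left `m × m` block of `A`, the truncated
row `v_s = ((T_s e_i)_n)_{i<m}` then satisfies `(T_s A^k x)_n = v_s M^k · (x_i)_{i<m}` and
solves the linear ODE `v' = v M` in `ℝ^m`. So `v_t = v_0 exp(tM)`, and pairing with `x` and
expanding the exponential gives the series.
-/

open Filter Topology Set Matrix

theorem LinearMap.apply_eq_sum_single_of_forall_eq_zero {R M : Type*} [Ring R] [AddCommGroup M]
    [Module R M] {m : ℕ} (L : (ℕ → R) →ₗ[R] M) (hL : ∀ z : ℕ → R, (∀ j < m, z j = 0) → L z = 0)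
    (y : ℕ → R) : L y = ∑ i : Fin m, y i • L (Pi.single i 1) := by
  rw [← sub_eq_zero]
  simp_rw [← map_smul, ← map_sum, ← map_sub]
  refine hL _ fun j hj => ?_
  rw [Pi.sub_apply, Finset.sum_apply, Finset.sum_eq_single ⟨j, hj⟩] <;>
    simp +contextual [Fin.ext_iff, eq_comm]

theorem exists_forall_eq_zero_of_bddAbove {ι : Type*} (L : ι → (ℕ → ℝ) →L[ℝ] ℝ)
    (hL : ∀ x, BddAbove (range fun i => |L i x|)) :
    ∃ m, ∀ i z, (∀ j < m, z j = 0) → L i z = 0 := by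
  have hequi : UniformEquicontinuous ((↑) ∘ L) :=
    (norm_withSeminorms ℝ ℝ).banach_steinhaus fun _ x => by simpa using hL x
  have hnhds := hequi.equicontinuous 0 _ (Metric.dist_mem_uniformity one_pos)
  rw [Filter.Eventually, nhds_pi] at hnhds
  obtain ⟨I, hI, U, hU, hIU⟩ := Filter.mem_pi.1 hnhds
  obtain ⟨m, hm⟩ := hI.bddAbove
  refine ⟨m + 1, fun i z hz => ?_⟩
  have hsmall : ∀ c : ℝ, |c * L i z| < 1 := fun c => by
    have hcz : c • z ∈ I.pi U := fun j hj => by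
      simpa [hz j (Nat.lt_succ_of_le (hm hj))] using mem_of_mem_nhds (hU j)
    simpa [dist_eq_norm, abs_sub_comm] using (hIU hcz : ∀ i, _) i
  by_contra hne
  have := hsmall (L i z)⁻¹
  rw [inv_mul_cancel₀ hne] at this
  norm_num at this

theorem exists_forall_apply_eq_zero_of_isCompact {α : Type*} [TopologicalSpace α]
    (T : α → (ℕ → ℝ) →L[ℝ] (ℕ → ℝ)) {K : Set α} (hK : IsCompact K)
    (hT : ∀ x, ContinuousOn (fun s => T s x) K) (n : ℕ) :
    ∃ m, ∀ s ∈ K, ∀ z : ℕ → ℝ, (∀ j < m, z j = 0) → T s z n = 0 := by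
  obtain ⟨m, hm⟩ := exists_forall_eq_zero_of_bddAbove
    (fun s : K => (ContinuousLinearMap.proj n).comp (T s)) fun x => by
      obtain ⟨C, hC⟩ :=
        hK.exists_bound_of_continuousOn ((continuous_apply n).comp_continuousOn (hT x))
      exact ⟨C, forall_mem_range.2 fun s => hC s s.2⟩
  exact ⟨m, fun s hs => hm ⟨s, hs⟩⟩

section Semigroup

variable {X : Type*} [AddCommGroup X] [Module ℝ X] [TopologicalSpace X] {T : ℝ → X →L[ℝ] X}

theorem hasDerivWithinAt_semigroup_apply
    (hTadd : ∀ s t : ℝ, 0 ≤ s → 0 ≤ t → T (s + t) = (T s).comp (T t)) (φ : X →L[ℝ] ℝ)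
    {y a : X} (hy : Tendsto (fun h : ℝ => h⁻¹ • (T h y - y)) (𝓝[>] 0) (𝓝 a)) {s : ℝ}
    (hs : 0 ≤ s) : HasDerivWithinAt (fun r => φ (T r y)) (φ (T s a)) (Ici s) s := by
  have hshift : 𝓝[>] s = map (s + ·) (𝓝[>] 0) := by simp
  rw [hasDerivWithinAt_iff_tendsto_slope, Ici_sdiff_left, hshift, tendsto_map'_iff]
  refine (((φ.comp (T s)).continuous.tendsto a).comp hy).congr' ?_
  filter_upwards [self_mem_nhdsWithin] with h (hh : 0 < h)
  simp [slope, hTadd s h hs hh.le]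

theorem semigroup_apply_pow_eq_zero
    (hTadd : ∀ s t : ℝ, 0 ≤ s → 0 ≤ t → T (s + t) = (T s).comp (T t)) {A : X →L[ℝ] X}
    (hA : ∀ x : X, Tendsto (fun h : ℝ => h⁻¹ • (T h x - x)) (𝓝[>] 0) (𝓝 (A x)))
    (φ : X →L[ℝ] ℝ) {b : ℝ} {S : Set X} (hS : ∀ s ∈ Ico 0 b, ∀ z ∈ S, φ (T s z) = 0) (k : ℕ) :
    ∀ s ∈ Ico 0 b, ∀ z ∈ S, φ (T s ((A ^ k) z)) = 0 := by
  induction k with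
  | zero => simpa using hS
  | succ k ih =>
    intro s hs z hz
    have hzero : (fun r => φ (T r ((A ^ k) z))) =ᶠ[𝓝[Ici s] s] fun _ => 0 := by
      filter_upwards [Ico_mem_nhdsGE hs.2] with r hr
      exact ih r ⟨hs.1.trans hr.1, hr.2⟩ z hz
    rw [pow_succ', mul_apply_eq_comp]
    exact (uniqueDiffWithinAt_Ici s).eq_deriv _
      (hasDerivWithinAt_semigroup_apply hTadd φ (hA _) hs.1)
      ((hasDerivWithinAt_const s _ 0).congr_of_eventuallyEq hzero (ih s hs z hz))

end Semigroup

section LinearODE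

variable {E : Type*} [NormedAddCommGroup E] [NormedSpace ℝ E] [CompleteSpace E]

theorem eq_exp_smul_apply_of_hasDerivWithinAt (B : E →L[ℝ] E) {f : ℝ → E} {t : ℝ}
    (ht : 0 ≤ t) (hf : ContinuousOn f (Icc 0 t))
    (hf' : ∀ s ∈ Ico 0 t, HasDerivWithinAt f (B (f s)) (Ici s) s) :
    f t = NormedSpace.exp (t • B) (f 0) := by
  have hexp : ∀ s, HasDerivAt (fun r : ℝ => NormedSpace.exp (r • B) (f 0))
      (B (NormedSpace.exp (s • B) (f 0))) s := fun s => by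
    simpa using (hasDerivAt_exp_smul_const' B s).clm_apply (hasDerivAt_const s (f 0))
  refine ODE_solution_unique_of_mem_Icc_right (v := fun _ => B) (s := fun _ => univ)
    (fun _ _ => B.lipschitz.lipschitzOnWith) hf hf' (fun _ _ => trivial)
    (fun s _ => (hexp s).continuousAt.continuousWithinAt) (fun s _ => (hexp s).hasDerivWithinAt)
    (fun _ _ => trivial) (by simp) ⟨ht, le_rfl⟩

theorem tendsto_sum_range_pow_smul_apply_exp (B : E →L[ℝ] E) (t : ℝ) (u : E) :
    Tendsto (fun N => ∑ k ∈ Finset.range N, (t ^ k / k.factorial) • (B ^ k) u) atTop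
      (𝓝 (NormedSpace.exp (t • B) u)) := by
  convert ((NormedSpace.exp_series_hasSum_exp' (𝕂 := ℝ) (t • B)).mapL
    (ContinuousLinearMap.apply ℝ E u)).tendsto_sum_nat using 3 with N k <;>
  simp [smul_pow, smul_smul, div_eq_inv_mul]

end LinearODE

def rowHead (L : (ℕ → ℝ) →L[ℝ] (ℕ → ℝ)) (n m : ℕ) : Fin m → ℝ := fun i => L (Pi.single i 1) n

def headBlock (A : (ℕ → ℝ) →L[ℝ] (ℕ → ℝ)) (m : ℕ) : Matrix (Fin m) (Fin m) ℝ :=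
  Matrix.of fun i j => A (Pi.single j 1) i

section Rows

variable {L A : (ℕ → ℝ) →L[ℝ] (ℕ → ℝ)} {n m : ℕ}

theorem apply_eq_rowHead_dotProduct (hL : ∀ z : ℕ → ℝ, (∀ j < m, z j = 0) → L z n = 0)
    (y : ℕ → ℝ) : L y n = rowHead L n m ⬝ᵥ fun i => y i := by
  simpa [rowHead, dotProduct, mul_comm] using
    ((ContinuousLinearMap.proj n).comp L).toLinearMap.apply_eq_sum_single_of_forall_eq_zero hL y

theorem rowHead_mul (hL : ∀ z : ℕ → ℝ, (∀ j < m, z j = 0) → L z n = 0) :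
    rowHead (L * A) n m = rowHead L n m ᵥ* headBlock A m := by
  ext j
  simp [rowHead, vecMul, headBlock, apply_eq_rowHead_dotProduct hL]

theorem rowHead_mul_pow (hL : ∀ k, ∀ z : ℕ → ℝ, (∀ j < m, z j = 0) → (L * A ^ k) z n = 0)
    (k : ℕ) :
    rowHead (L * A ^ k) n m =
      ((vecMulLinear (headBlock A m)).toContinuousLinearMap ^ k) (rowHead L n m) := by
  induction k with
  | zero => simp
  | succ k ih =>
    rw [pow_succ, ← mul_assoc, rowHead_mul (hL k), ih, pow_succ', mul_apply_eq_comp]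
    rfl

end Rows

theorem hasDerivWithinAt_rowHead_semigroup {T : ℝ → (ℕ → ℝ) →L[ℝ] (ℕ → ℝ)}
    (hTadd : ∀ s t : ℝ, 0 ≤ s → 0 ≤ t → T (s + t) = (T s).comp (T t))
    {A : (ℕ → ℝ) →L[ℝ] (ℕ → ℝ)}
    (hA : ∀ x : ℕ → ℝ, Tendsto (fun h : ℝ => h⁻¹ • (T h x - x)) (𝓝[>] 0) (𝓝 (A x)))
    {n m : ℕ} {s : ℝ} (hs : 0 ≤ s) :
    HasDerivWithinAt (fun r => rowHead (T r) n m) (rowHead (T s * A) n m) (Ici s) s :=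
  hasDerivWithinAt_pi.2 fun _ =>
    hasDerivWithinAt_semigroup_apply hTadd (ContinuousLinearMap.proj n) (hA _) hs

/-- For a strongly continuous semigroup on `ω = ℝ^ℕ` with
(continuous linear) generator `A`, the exponential series converges and
represents the semigroup: `T_t x = ∑_{k=0}^∞ (t^k/k!) • A^k x`. -/
theorem stmt4
    (T : ℝ → (ℕ → ℝ) →L[ℝ] (ℕ → ℝ))
    (hT0 : T 0 = ContinuousLinearMap.id ℝ (ℕ → ℝ))
    (hTadd : ∀ s t : ℝ, 0 ≤ s → 0 ≤ t → T (s + t) = (T s).comp (T t))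
    (horbit : ∀ x : ℕ → ℝ, ContinuousOn (fun t : ℝ => T t x) (Set.Ici 0))
    (A : (ℕ → ℝ) →L[ℝ] (ℕ → ℝ))
    (hA : ∀ x : ℕ → ℝ,
      Tendsto (fun h : ℝ => h⁻¹ • (T h x - x)) (𝓝[>] 0) (𝓝 (A x))) :
    ∀ x : ℕ → ℝ, ∀ t : ℝ, 0 ≤ t →
      Tendsto (fun N : ℕ => ∑ k ∈ Finset.range N,
          (t ^ k / (Nat.factorial k : ℝ)) • (A ^ k) x) atTop (𝓝 (T t x)) := by
  intro x t ht
  rw [tendsto_pi_nhds]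
  intro n
  -- the vanishing for `A ^ k` only survives on the half-open interval, so we work up to `t + 1`
  obtain ⟨m, hm⟩ := exists_forall_apply_eq_zero_of_isCompact T
    (isCompact_Icc (a := 0) (b := t + 1)) (fun x => (horbit x).mono Icc_subset_Ici_self) n
  have hvan : ∀ s ∈ Ico 0 (t + 1), ∀ k, ∀ z : ℕ → ℝ, (∀ j < m, z j = 0) →
      (T s * A ^ k) z n = 0 :=
    fun s hs k => semigroup_apply_pow_eq_zero hTadd hA (ContinuousLinearMap.proj n)
      (fun s hs => hm s (Ico_subset_Icc_self hs)) k s hs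
  set B := (vecMulLinear (headBlock A m)).toContinuousLinearMap
  set v := fun s => rowHead (T s) n m
  have hrow : ∀ s ∈ Ico 0 (t + 1), ∀ k y, (T s * A ^ k) y n = (B ^ k) (v s) ⬝ᵥ fun i => y i :=
    fun s hs k y => by
      rw [← rowHead_mul_pow (hvan s hs), apply_eq_rowHead_dotProduct (hvan s hs k) y]
  have hexp : v t = NormedSpace.exp (t • B) (v 0) := by
    refine eq_exp_smul_apply_of_hasDerivWithinAt B ht ?_ fun s hs => ?_
    · exact continuousOn_pi.2 fun i => (continuous_apply n).comp_continuousOn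
        ((horbit _).mono Icc_subset_Ici_self)
    · have := hasDerivWithinAt_rowHead_semigroup hTadd hA (n := n) (m := m) hs.1
      rwa [rowHead_mul (hm s ⟨hs.1, by linarith [hs.2]⟩)] at this
  have hpow : ∀ k, (A ^ k) x n = (B ^ k) (v 0) ⬝ᵥ fun i => x i := fun k => by
    simpa [hT0, mul_apply_eq_comp] using hrow 0 ⟨le_rfl, by linarith⟩ k x
  have hTt : T t x n = v t ⬝ᵥ fun i => x i := by
    simpa using hrow t ⟨ht, by linarith⟩ 0 x
  rw [hTt, hexp]
  refine (((continuous_id.dotProduct continuous_const).tendsto _).comp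
    (tendsto_sum_range_pow_smul_apply_exp B t (v 0))).congr fun N => ?_
  simp only [Function.comp_apply, id, sum_dotProduct, smul_dotProduct, Finset.sum_apply,
    Pi.smul_apply, hpow]
end

section
/- Let ω = ℝ^ℕ carry the product topology and let A be a continuous linear operator on ω. If A is the generator of some strongly continuous semigroup (T_t)_{t≥0} on ω, then A satisfies: for every n ∈ ℕ there exists m ∈ ℕ such that for all k ∈ ℕ and all x ∈ ω, if x_j = 0 for all j ≤ m, then (A^k x)_j = 0 for all j ≤ n. -/
open Filter Topology Set

/-- If a continuous linear operator `A` on `ω = ℝ^ℕ` generates a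
strongly continuous semigroup, then for every `n` there is `m` such that for
all `k` and `x`: if `x_j = 0` for all `j ≤ m`, then `(A^k x)_j = 0` for all
`j ≤ n`. -/
theorem stmt6
    (A : (ℕ → ℝ) →L[ℝ] (ℕ → ℝ))
    (T : ℝ → (ℕ → ℝ) →L[ℝ] (ℕ → ℝ))
    (hT0 : T 0 = ContinuousLinearMap.id ℝ (ℕ → ℝ))
    (hTadd : ∀ s t : ℝ, 0 ≤ s → 0 ≤ t → T (s + t) = (T s).comp (T t))
    (horbit : ∀ x : ℕ → ℝ, ContinuousOn (fun t : ℝ => T t x) (Set.Ici 0))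
    (hA : ∀ x : ℕ → ℝ,
      Tendsto (fun h : ℝ => h⁻¹ • (T h x - x)) (𝓝[>] 0) (𝓝 (A x))) :
    ∀ n : ℕ, ∃ m : ℕ, ∀ k : ℕ, ∀ x : ℕ → ℝ,
      (∀ j ≤ m, x j = 0) → ∀ j ≤ n, (A ^ k) x j = 0 := by
  -- A commutes with T t
  have hcomm : ∀ t : ℝ, 0 ≤ t → ∀ y : ℕ → ℝ, T t (A y) = A (T t y) := by
    intro t ht y
    have h1 : Tendsto (fun h : ℝ => h⁻¹ • (T h (T t y) - T t y)) (𝓝[>] 0)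
        (𝓝 (A (T t y))) := hA _
    have h2 : Tendsto (fun h : ℝ => T t (h⁻¹ • (T h y - y))) (𝓝[>] 0)
        (𝓝 (T t (A y))) := ((T t).continuous.tendsto _).comp (hA y)
    have heq : ∀ᶠ h in 𝓝[>] (0:ℝ),
        T t (h⁻¹ • (T h y - y)) = h⁻¹ • (T h (T t y) - T t y) := by
      filter_upwards [self_mem_nhdsWithin] with h hh
      have e1 : T h (T t y) = T (h + t) y := by
        rw [hTadd h t (le_of_lt hh) ht]; rfl
      have e2 : T t (T h y) = T (t + h) y := by
        rw [hTadd t h ht (le_of_lt hh)]; rfl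
      rw [map_smul, map_sub, e2, add_comm t h, ← e1]
    exact tendsto_nhds_unique (h2.congr' heq) h1
  -- key: for each coordinate j there is m
  have key : ∀ j : ℕ, ∃ m : ℕ, ∀ k : ℕ, ∀ x : ℕ → ℝ,
      (∀ i ≤ m, x i = 0) → (A ^ k) x j = 0 := by
    intro j
    set F : (Icc (0:ℝ) 1) → (ℕ → ℝ) →L[ℝ] ℝ :=
      fun t => (ContinuousLinearMap.proj j).comp (T t.1) with hF
    have hbdd : ∀ (k : Fin 1) (x : ℕ → ℝ),
        BddAbove (Set.range fun t : Icc (0:ℝ) 1 => (normSeminorm ℝ ℝ) (F t x)) := by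
      intro _ x
      have hc : ContinuousOn (fun t : ℝ => ‖(T t x) j‖) (Icc 0 1) :=
        (((continuous_apply j).comp_continuousOn
          ((horbit x).mono Icc_subset_Ici_self))).norm
      have := (isCompact_Icc (a := (0:ℝ)) (b := 1)).bddAbove_image hc
      rw [← Set.range_restrict] at this
      exact this
    have hec : UniformEquicontinuous ((↑) ∘ F) :=
      (norm_withSeminorms ℝ ℝ).banach_steinhaus hbdd
    have hecat : EquicontinuousAt (fun t : Icc (0:ℝ) 1 => (F t : (ℕ → ℝ) → ℝ)) 0 :=
      hec.equicontinuous 0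
    rw [Metric.equicontinuousAt_iff_right] at hecat
    have hev := hecat 1 one_pos
    rw [nhds_pi, Filter.eventually_iff, Filter.mem_pi] at hev
    obtain ⟨I, hIfin, V, hV, hVsub⟩ := hev
    obtain ⟨m, hm⟩ := hIfin.bddAbove
    -- key vanishing on [0,1]
    have hkey : ∀ x : ℕ → ℝ, (∀ i ≤ m, x i = 0) →
        ∀ t ∈ Icc (0:ℝ) 1, (T t x) j = 0 := by
      intro x hx t ht
      have hcx : ∀ c : ℝ, ∀ i : Icc (0:ℝ) 1, |c * (T i.1 x) j| < 1 := by
        intro c i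
        have hmem : c • x ∈ I.pi V := by
          intro i hi
          have : x i = 0 := hx i (hm hi)
          simp only [Pi.smul_apply, this, smul_zero]
          exact mem_of_mem_nhds (hV i)
        have := hVsub hmem
        simp only [Set.mem_setOf_eq] at this
        have h2 := this i
        simp only [hF, ContinuousLinearMap.comp_apply, ContinuousLinearMap.proj_apply,
          map_zero, Real.dist_eq, zero_sub, abs_neg, map_smul] at h2
        simpa using h2
      by_contra hne
      have := hcx (2 * ((T t x) j)⁻¹) ⟨t, ht⟩
      rw [mul_assoc, inv_mul_cancel₀ hne, mul_one] at this
      norm_num at this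
    refine ⟨m, ?_⟩
    intro k x hx
    have main : ∀ k : ℕ, ∀ t ∈ Ico (0:ℝ) 1, (T t ((A ^ k) x)) j = 0 := by
      intro k
      induction k with
      | zero =>
        intro t ht
        simpa using hkey x hx t (Ico_subset_Icc_self ht)
      | succ k ih =>
        intro t ht
        have hAy : (A ^ (k + 1)) x = A ((A ^ k) x) := by
          rw [pow_succ']; rfl
        set y := (A ^ k) x with hy
        have h1 : T t (A y) = A (T t y) := hcomm t ht.1 y
        have h3 : Tendsto (fun h : ℝ => (h⁻¹ • (T h (T t y) - T t y)) j)
            (𝓝[>] 0) (𝓝 ((A (T t y)) j)) :=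
          ((continuous_apply j).tendsto _).comp (hA (T t y))
        have h4 : ∀ᶠ h in 𝓝[>] (0:ℝ), (h⁻¹ • (T h (T t y) - T t y)) j = 0 := by
          have hmem : Ioo (0:ℝ) (1 - t) ∈ 𝓝[>] (0:ℝ) :=
            Ioo_mem_nhdsGT_of_mem ⟨le_refl 0, by linarith [ht.2]⟩
          filter_upwards [hmem] with h hh
          have e1 : T h (T t y) = T (h + t) y := by
            rw [hTadd h t hh.1.le ht.1]; rfl
          have e2 : (T (h + t) y) j = 0 :=
            ih (h + t) ⟨by linarith [ht.1, hh.1], by linarith [hh.2]⟩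
          have e3 : (T t y) j = 0 := ih t ht
          simp [e1, Pi.smul_apply, Pi.sub_apply, e2, e3]
        have h5 : (A (T t y)) j = 0 :=
          tendsto_nhds_unique h3 (Tendsto.congr' (h4.mono fun _ e => e.symm)
            tendsto_const_nhds)
        rw [hAy, h1, h5]
    have := main k 0 ⟨le_refl 0, one_pos⟩
    rwa [hT0] at this
  -- assemble
  intro n
  choose M hM using key
  refine ⟨(Finset.range (n + 1)).sup M, ?_⟩
  intro k x hx j hj
  exact hM j k x fun i hi => hx i
    (hi.trans (Finset.le_sup (Finset.mem_range.mpr (Nat.lt_succ_of_le hj))))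
end

section
/- Let ω = ℝ^ℕ carry the product topology and let A be a continuous linear operator on ω satisfying: for every n ∈ ℕ there exists m ∈ ℕ such that for all k ∈ ℕ and all x ∈ ω, if x_j = 0 for all j ≤ m then (A^k x)_j = 0 for all j ≤ n. Then for every t ≥ 0 and x ∈ ω the series exp(tA) x = ∑_{k=0}^∞ (t^k / k!) • A^k x converges in ω, the family (exp(tA))_{t≥0} is a strongly continuous semigroup of continuous linear operators on ω, and its generator is A. -/
/-!
Write `P_N : ℝ^ℕ → ℝ^{N+1}` for the restriction to the coordinates `0, …, N` and `C_N` for the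
compression of `A` to them. Finite propagation says that the first `n + 1` coordinates of
`A^k x` depend only on `P_N x` once `N ≥ n, m(n)`, uniformly in `k`; by induction on `k` they are
therefore the corresponding coordinates of `C_N^k (P_N x)`. So coordinate `j` of the exponential
series is a coordinate of the matrix exponential `exp(t C_N) (P_N x)`, and this value does not
depend on the admissible level `N`. The semigroup law, continuity and the generator then follow
from the same properties of matrix exponentials, computed at a level large enough for all
coordinates involved.
-/

open Filter Topology NormedSpace

section ExpSmul

variable {𝕂 𝔸 : Type*} [RCLike 𝕂]

theorem NormedSpace.exp_add_smul [NormedRing 𝔸] [NormedAlgebra 𝕂 𝔸] [CompleteSpace 𝔸]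
    (x : 𝔸) (s t : 𝕂) : exp ((s + t) • x) = exp (s • x) * exp (t • x) := by
  have hball : ∀ y : 𝔸, y ∈ Metric.eball (0 : 𝔸) (expSeries 𝕂 𝔸).radius := fun y => by
    simp [expSeries_radius_eq_top]
  rw [add_smul]
  exact exp_add_of_commute_of_mem_ball (((Commute.refl x).smul_left s).smul_right t)
    (hball _) (hball _)

theorem NormedSpace.hasSum_exp_smul_apply {E : Type*} [NormedAddCommGroup E] [NormedSpace 𝕂 E]
    [CompleteSpace E] (C : E →L[𝕂] E) (t : 𝕂) (v : E) :
    HasSum (fun k => (t ^ k / k.factorial) • (C ^ k) v) (exp (t • C) v) := by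
  simpa [smul_pow, smul_smul, div_eq_inv_mul] using
    (exp_series_hasSum_exp' (𝕂 := 𝕂) (t • C)).mapL (ContinuousLinearMap.apply 𝕂 E v)

end ExpSmul

noncomputable section

namespace SequenceSpace

def IsPropagationBound (A : (ℕ → ℝ) →L[ℝ] (ℕ → ℝ)) (n N : ℕ) : Prop :=
  ∀ k x, (∀ j ≤ N, x j = 0) → ∀ j ≤ n, (A ^ k) x j = 0

variable {A : (ℕ → ℝ) →L[ℝ] (ℕ → ℝ)} {n N : ℕ}

theorem IsPropagationBound.mono {n' N' : ℕ} (h : IsPropagationBound A n N) (hn : n' ≤ n)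
    (hN : N ≤ N') : IsPropagationBound A n' N' :=
  fun k x hx j hj => h k x (fun i hi => hx i (hi.trans hN)) j (hj.trans hn)

theorem IsPropagationBound.pow_apply_eq (h : IsPropagationBound A n N) (k : ℕ) {x y : ℕ → ℝ}
    (hxy : ∀ i ≤ N, x i = y i) {j : ℕ} (hj : j ≤ n) : (A ^ k) x j = (A ^ k) y j := by
  have := h k (x - y) (fun i hi => sub_eq_zero.2 (hxy i hi)) j hj
  rwa [map_sub, Pi.sub_apply, sub_eq_zero] at this

def restrictFin (N : ℕ) : (ℕ → ℝ) →L[ℝ] (Fin (N + 1) → ℝ) :=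
  ContinuousLinearMap.pi fun i => ContinuousLinearMap.proj (i : ℕ)

@[simp]
theorem restrictFin_apply (x : ℕ → ℝ) (i : Fin (N + 1)) : restrictFin N x i = x i := rfl

theorem restrictFin_extend (v : Fin (N + 1) → ℝ) :
    restrictFin N (Function.extend Fin.val v 0) = v :=
  funext fun i => Fin.val_injective.extend_apply v 0 i

theorem extend_val_apply_of_le (v : Fin (N + 1) → ℝ) {i : ℕ} (hi : i ≤ N) :
    Function.extend Fin.val v 0 i = v ⟨i, Nat.lt_succ_of_le hi⟩ :=
  Fin.val_injective.extend_apply v 0 ⟨i, Nat.lt_succ_of_le hi⟩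

variable (A) in
def compression (N : ℕ) : (Fin (N + 1) → ℝ) →L[ℝ] (Fin (N + 1) → ℝ) :=
  LinearMap.toContinuousLinearMap
    ((restrictFin N ∘L A).toLinearMap ∘ₗ Function.ExtendByZero.linearMap ℝ Fin.val)

theorem compression_apply (v : Fin (N + 1) → ℝ) :
    compression A N v = restrictFin N (A (Function.extend Fin.val v 0)) := rfl

theorem IsPropagationBound.pow_apply_eq_compression_pow (h : IsPropagationBound A n N)
    (k : ℕ) (x : ℕ → ℝ) (j : Fin (N + 1)) (hj : (j : ℕ) ≤ n) :
    (A ^ k) x j = (compression A N ^ k) (restrictFin N x) j := by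
  induction k generalizing x with
  | zero => rfl
  | succ k ih =>
    have hx : ∀ i ≤ N, x i = Function.extend Fin.val (restrictFin N x) 0 i := fun i hi =>
      (extend_val_apply_of_le (restrictFin N x) hi).symm
    rw [h.pow_apply_eq (k + 1) hx hj, pow_succ, mul_apply_eq_comp, ih, pow_succ,
      mul_apply_eq_comp, compression_apply]

theorem IsPropagationBound.hasSum_exp_compression (h : IsPropagationBound A n N) (t : ℝ)
    (x : ℕ → ℝ) (j : Fin (N + 1)) (hj : (j : ℕ) ≤ n) :
    HasSum (fun k => t ^ k / k.factorial * (A ^ k) x j)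
      (exp (t • compression A N) (restrictFin N x) j) := by
  simpa [h.pow_apply_eq_compression_pow _ x j hj] using
    Pi.hasSum.1 (hasSum_exp_smul_apply (compression A N) t (restrictFin N x)) j

def level (m : ℕ → ℕ) (j : ℕ) : ℕ := max j (m j)

variable {m : ℕ → ℕ}

theorem le_level (m : ℕ → ℕ) (j : ℕ) : j ≤ level m j := le_max_left _ _

def toLevel (m : ℕ → ℕ) (j : ℕ) : Fin (level m j + 1) := ⟨j, Nat.lt_succ_of_le (le_level m j)⟩

@[simp]
theorem toLevel_val (m : ℕ → ℕ) (j : ℕ) : (toLevel m j : ℕ) = j := rfl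

theorem IsPropagationBound.level {j : ℕ} (h : IsPropagationBound A j (m j)) :
    IsPropagationBound A j (level m j) :=
  h.mono le_rfl (le_max_right _ _)

variable (A) in
def expSemigroup (m : ℕ → ℕ) (t : ℝ) : (ℕ → ℝ) →L[ℝ] (ℕ → ℝ) :=
  ContinuousLinearMap.pi fun j => (ContinuousLinearMap.proj (toLevel m j)).comp
    ((exp (t • compression A (level m j))).comp (restrictFin (level m j)))

theorem expSemigroup_apply (t : ℝ) (x : ℕ → ℝ) (j : ℕ) :
    expSemigroup A m t x j =
      exp (t • compression A (level m j)) (restrictFin (level m j) x) (toLevel m j) := rfl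

theorem expSemigroup_apply_congr (t : ℝ) {x y : ℕ → ℝ} {j : ℕ}
    (hxy : ∀ i ≤ level m j, x i = y i) : expSemigroup A m t x j = expSemigroup A m t y j := by
  have : restrictFin (level m j) x = restrictFin (level m j) y :=
    funext fun i => hxy i (Nat.lt_succ_iff.1 i.2)
  rw [expSemigroup_apply, expSemigroup_apply, this]

theorem hasSum_expSemigroup_apply (hm : ∀ n, IsPropagationBound A n (m n)) (t : ℝ)
    (x : ℕ → ℝ) (j : ℕ) :
    HasSum (fun k => t ^ k / k.factorial * (A ^ k) x j) (expSemigroup A m t x j) :=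
  (hm j).level.hasSum_exp_compression t x _ le_rfl

theorem expSemigroup_apply_eq_exp_compression (hm : ∀ n, IsPropagationBound A n (m n))
    (h : IsPropagationBound A n N) (t : ℝ) (x : ℕ → ℝ) (j : Fin (N + 1)) (hj : (j : ℕ) ≤ n) :
    expSemigroup A m t x j = exp (t • compression A N) (restrictFin N x) j :=
  (hasSum_expSemigroup_apply hm t x j).unique (h.hasSum_exp_compression t x j hj)

theorem tendsto_sum_expSemigroup (hm : ∀ n, IsPropagationBound A n (m n)) (t : ℝ)
    (x : ℕ → ℝ) :
    Tendsto (fun K => ∑ k ∈ Finset.range K, (t ^ k / k.factorial : ℝ) • (A ^ k) x) atTop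
      (𝓝 (expSemigroup A m t x)) := by
  refine tendsto_pi_nhds.2 fun j => ?_
  simpa [Finset.sum_apply] using (hasSum_expSemigroup_apply hm t x j).tendsto_sum_nat

theorem expSemigroup_zero : expSemigroup A m 0 = ContinuousLinearMap.id ℝ (ℕ → ℝ) := by
  ext x j
  simp [expSemigroup_apply]

theorem expSemigroup_add (hm : ∀ n, IsPropagationBound A n (m n)) (s t : ℝ) :
    expSemigroup A m (s + t) = (expSemigroup A m s).comp (expSemigroup A m t) := by
  ext x j
  set q := level m j
  set P := level m q
  have hP : IsPropagationBound A q P := (hm q).level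
  have hjq : j ≤ q := le_level m j
  have hqP : q ≤ P := le_level m q
  -- At level `P` the compression reproduces every coordinate `i ≤ q` of `expSemigroup A m t x`,
  -- and these are the only coordinates that coordinate `j` of `expSemigroup A m s` reads.
  set w := exp (t • compression A P) (restrictFin P x)
  have hw : ∀ i ≤ q, Function.extend Fin.val w 0 i = expSemigroup A m t x i := fun i hi => by
    rw [extend_val_apply_of_le _ (hi.trans hqP),
      expSemigroup_apply_eq_exp_compression hm hP t x ⟨i, _⟩ hi]
  have hjP : IsPropagationBound A j P := hP.mono hjq le_rfl
  calc expSemigroup A m (s + t) x j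
      = exp ((s + t) • compression A P) (restrictFin P x) ⟨j, by omega⟩ :=
        expSemigroup_apply_eq_exp_compression hm hjP _ _ ⟨j, _⟩ le_rfl
    _ = exp (s • compression A P) w ⟨j, by omega⟩ := by
        rw [exp_add_smul (𝕂 := ℝ) (compression A P) s t]; rfl
    _ = expSemigroup A m s (Function.extend Fin.val w 0) j := by
        rw [expSemigroup_apply_eq_exp_compression hm hjP s _ ⟨j, _⟩ le_rfl, restrictFin_extend]
    _ = expSemigroup A m s (expSemigroup A m t x) j := expSemigroup_apply_congr s hw

theorem hasDerivAt_expSemigroup_apply (t : ℝ) (x : ℕ → ℝ) (j : ℕ) :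
    HasDerivAt (fun u => expSemigroup A m u x j)
      ((exp (t • compression A (level m j)) * compression A (level m j))
        (restrictFin (level m j) x) (toLevel m j)) t :=
  let evalAt : ((Fin (level m j + 1) → ℝ) →L[ℝ] (Fin (level m j + 1) → ℝ)) →L[ℝ] ℝ :=
    (ContinuousLinearMap.proj (R := ℝ) (φ := fun _ => ℝ) (toLevel m j)).comp
      (ContinuousLinearMap.apply ℝ _ (restrictFin (level m j) x))
  evalAt.hasFDerivAt.comp_hasDerivAt t (hasDerivAt_exp_smul_const _ t)

theorem continuous_expSemigroup_apply (x : ℕ → ℝ) :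
    Continuous fun t => expSemigroup A m t x :=
  continuous_pi fun j => continuous_iff_continuousAt.2 fun t =>
    (hasDerivAt_expSemigroup_apply t x j).continuousAt

theorem tendsto_expSemigroup_slope (hm : ∀ n, IsPropagationBound A n (m n)) (x : ℕ → ℝ) :
    Tendsto (fun h : ℝ => h⁻¹ • (expSemigroup A m h x - x)) (𝓝[>] 0) (𝓝 (A x)) := by
  refine tendsto_pi_nhds.2 fun j => ?_
  have hderiv := (hasDerivAt_expSemigroup_apply (A := A) (m := m) 0 x j).tendsto_slope_zero_right
  have hA := (hm j).level.pow_apply_eq_compression_pow 1 x (toLevel m j) le_rfl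
  rw [pow_one, pow_one] at hA
  simp only [zero_smul, exp_zero, one_mul, zero_add, expSemigroup_zero, ← hA] at hderiv
  simpa using hderiv

end SequenceSpace

end

open SequenceSpace

/-- If a continuous linear operator `A` on `ω = ℝ^ℕ` satisfies
the finite-propagation condition, then the exponential series
`exp(tA) x = ∑_{k=0}^∞ (t^k/k!) • A^k x` converges for every `t ≥ 0` and `x`,
the resulting family is a strongly continuous semigroup of continuous linear
operators, and its generator is `A`. -/
theorem stmt7
    (A : (ℕ → ℝ) →L[ℝ] (ℕ → ℝ))
    (hcond : ∀ n : ℕ, ∃ m : ℕ, ∀ k : ℕ, ∀ x : ℕ → ℝ,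
      (∀ j ≤ m, x j = 0) → ∀ j ≤ n, (A ^ k) x j = 0) :
    ∃ T : ℝ → (ℕ → ℝ) →L[ℝ] (ℕ → ℝ),
      (∀ t : ℝ, 0 ≤ t → ∀ x : ℕ → ℝ,
        Tendsto (fun N : ℕ => ∑ k ∈ Finset.range N,
            (t ^ k / (Nat.factorial k : ℝ)) • (A ^ k) x) atTop (𝓝 (T t x))) ∧
      T 0 = ContinuousLinearMap.id ℝ (ℕ → ℝ) ∧
      (∀ s t : ℝ, 0 ≤ s → 0 ≤ t → T (s + t) = (T s).comp (T t)) ∧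
      (∀ x : ℕ → ℝ, ContinuousOn (fun t : ℝ => T t x) (Set.Ici 0)) ∧
      ∀ x : ℕ → ℝ,
        Tendsto (fun h : ℝ => h⁻¹ • (T h x - x)) (𝓝[>] 0) (𝓝 (A x)) := by
  choose m hm using hcond
  exact ⟨expSemigroup A m, fun t _ x => tendsto_sum_expSemigroup hm t x, expSemigroup_zero,
    fun s t _ _ => expSemigroup_add hm s t, fun x => (continuous_expSemigroup_apply x).continuousOn,
    tendsto_expSemigroup_slope hm⟩
end

section
/- Let ω = ℝ^ℕ carry the product topology and let A be a continuous linear operator on ω satisfying: for every n ∈ ℕ there exists m ∈ ℕ such that for all k ∈ ℕ and all x ∈ ω, if x_j = 0 for all j ≤ m then (A^k x)_j = 0 for all j ≤ n. Then for every n ∈ ℕ there exist m ∈ ℕ and λ > 0 such that for all k ∈ ℕ and all x ∈ ω: max_{j ≤ n} |(A^k x)_j| ≤ λ^k · max_{j ≤ m} |x_j|. -/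
open Filter Topology Set

/-- If a continuous linear operator `A` on `ω = ℝ^ℕ` satisfies
the finite-propagation condition, then for every `n` there are `m` and
`λ > 0` with `max_{j ≤ n} |(A^k x)_j| ≤ λ^k · max_{j ≤ m} |x_j|` for all `k`
and `x`. -/
theorem stmt8
    (A : (ℕ → ℝ) →L[ℝ] (ℕ → ℝ))
    (hcond : ∀ n : ℕ, ∃ m : ℕ, ∀ k : ℕ, ∀ x : ℕ → ℝ,
      (∀ j ≤ m, x j = 0) → ∀ j ≤ n, (A ^ k) x j = 0) :
    ∀ n : ℕ, ∃ m : ℕ, ∃ lam : ℝ, 0 < lam ∧ ∀ k : ℕ, ∀ x : ℕ → ℝ,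
      (Finset.Iic n).sup' Finset.nonempty_Iic (fun j => |(A ^ k) x j|) ≤
        lam ^ k * (Finset.Iic m).sup' Finset.nonempty_Iic (fun j => |x j|) := by
  intro n
  obtain ⟨m₀, hm₀⟩ := hcond n
  set m : ℕ := max m₀ n with hmdef
  have hnm : n ≤ m := le_max_right _ _
  -- coordinates ≤ n of A^k x depend only on x_{≤ m}
  have hL : ∀ k : ℕ, ∀ x y : ℕ → ℝ, (∀ j ≤ m, x j = y j) →
      ∀ j ≤ n, (A ^ k) x j = (A ^ k) y j := by
    intro k x y hxy j hj
    have h0 : ∀ j ≤ m₀, (x - y) j = 0 := by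
      intro i hi
      have := hxy i (le_trans hi (le_max_left _ _))
      simp [this]
    have h3 := hm₀ k (x - y) h0 j hj
    rw [map_sub] at h3
    have : (A ^ k) x j - (A ^ k) y j = 0 := by simpa using h3
    linarith
  -- truncation and truncated operator
    -- T x = truncation of A x
  set π : (ℕ → ℝ) → (ℕ → ℝ) := fun x j => if j ≤ m then x j else 0 with hπ
  set T : (ℕ → ℝ) → (ℕ → ℝ) := fun x => π (A x) with hT
  have hπF : ∀ x, ∀ j, ¬ j ≤ m → π x j = 0 := by intro x j hj; simp [hπ, hj]
  -- key identity
  have key' : ∀ k : ℕ, ∀ x : ℕ → ℝ, (∀ j, ¬ j ≤ m → x j = 0) →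
      ∀ j ≤ n, (A ^ k) x j = T^[k] x j := by
    intro k
    induction k with
    | zero => intro x hx j hj; simp
    | succ k ih =>
      intro x hx j hj
      have h1 : (A ^ (k + 1)) x = (A ^ k) (A x) := by
        rw [pow_succ]; rfl
      have h2 : ∀ j ≤ m, (A x) j = T x j := by
        intro i hi; simp [hT, hπ, hi]
      have h3 : (A ^ k) (A x) j = (A ^ k) (T x) j := hL k _ _ h2 j hj
      have h4 : (A ^ k) (T x) j = T^[k] (T x) j := by
        refine ih (T x) ?_ j hj
        intro i hi; simp [hT, hπ, hi]
      rw [h1, h3, h4, ← Function.iterate_succ_apply]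
  have key : ∀ k : ℕ, ∀ x : ℕ → ℝ, ∀ j ≤ n, (A ^ k) x j = T^[k] (π x) j := by
    intro k x j hj
    have h1 : (A ^ k) x j = (A ^ k) (π x) j := by
      refine hL k x (π x) ?_ j hj
      intro i hi; simp [hπ, hi]
    rw [h1]
    exact key' k (π x) (hπF x) j hj
  -- the constant
  set C : ℝ := ∑ i ∈ Finset.Iic m,
      (Finset.Iic m).sup' Finset.nonempty_Iic (fun j => |A (Pi.single i 1) j|) with hC
  have hC0 : 0 ≤ C := by
    apply Finset.sum_nonneg
    intro i _
    refine le_trans (abs_nonneg (A (Pi.single i 1) 0)) ?_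
    exact Finset.le_sup' (fun j => |A (Pi.single i 1) j|) (Finset.mem_Iic.mpr (Nat.zero_le m))
  -- supported functions are finite sums of singles
  have hdecomp : ∀ y : ℕ → ℝ, (∀ j, ¬ j ≤ m → y j = 0) →
      y = ∑ i ∈ Finset.Iic m, y i • (Pi.single i 1 : ℕ → ℝ) := by
    intro y hy
    funext j
    rw [Finset.sum_apply]
    by_cases hj : j ≤ m
    · rw [Finset.sum_eq_single j]
      · simp [Pi.single_apply]
      · intro i _ hij; simp [Pi.single_apply, Ne.symm hij]
      · intro h; exact absurd (Finset.mem_Iic.mpr hj) h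
    · rw [hy j hj]
      refine (Finset.sum_eq_zero ?_).symm
      intro i hi
      have : j ≠ i := by rintro rfl; exact hj (Finset.mem_Iic.mp hi)
      simp [Pi.single_apply, this]
  -- one-step bound on supported functions
  have hstep : ∀ y : ℕ → ℝ, (∀ j, ¬ j ≤ m → y j = 0) →
      (Finset.Iic m).sup' Finset.nonempty_Iic (fun j => |T y j|) ≤
        C * (Finset.Iic m).sup' Finset.nonempty_Iic (fun j => |y j|) := by
    intro y hy
    set p := (Finset.Iic m).sup' Finset.nonempty_Iic (fun j => |y j|) with hp
    have hp0 : 0 ≤ p := by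
      rw [hp]
      exact le_trans (abs_nonneg (y 0)) (Finset.le_sup' (fun j => |y j|) (Finset.mem_Iic.mpr (Nat.zero_le m)))
    apply Finset.sup'_le
    intro j hj
    have hjm : j ≤ m := Finset.mem_Iic.mp hj
    have hTy : T y j = A y j := by simp [hT, hπ, hjm]
    rw [hTy]
    have hy2 : A y = ∑ i ∈ Finset.Iic m, y i • A (Pi.single i 1) := by
      conv_lhs => rw [hdecomp y hy]
      rw [map_sum]
      simp
    rw [hy2, Finset.sum_apply]
    calc |∑ i ∈ Finset.Iic m, (y i • A (Pi.single i 1)) j|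
        ≤ ∑ i ∈ Finset.Iic m, |(y i • A (Pi.single i 1)) j| := Finset.abs_sum_le_sum_abs _ _
      _ ≤ ∑ i ∈ Finset.Iic m,
            ((Finset.Iic m).sup' Finset.nonempty_Iic (fun j => |A (Pi.single i 1) j|)) * p := by
          apply Finset.sum_le_sum
          intro i hi
          have : |(y i • A (Pi.single i 1)) j| = |y i| * |A (Pi.single i 1) j| := by
            simp [abs_mul, mul_comm]
          rw [this, mul_comm]
          apply mul_le_mul
          · exact Finset.le_sup' (fun j => |A (Pi.single i 1) j|) hj
          · rw [hp]; exact Finset.le_sup' (fun j => |y j|) hi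
          · exact abs_nonneg _
          · exact le_trans (abs_nonneg (A (Pi.single i 1) 0)) (Finset.le_sup' (fun j => |A (Pi.single i 1) j|) (Finset.mem_Iic.mpr (Nat.zero_le m)))
      _ = C * p := by rw [hC, Finset.sum_mul]
  -- T preserves supportedness
  have hTsupp : ∀ y : ℕ → ℝ, ∀ j, ¬ j ≤ m → T y j = 0 := by
    intro y j hj; simp [hT, hπ, hj]
  -- iterate bound
  have hiter : ∀ k : ℕ, ∀ y : ℕ → ℝ, (∀ j, ¬ j ≤ m → y j = 0) →
      (Finset.Iic m).sup' Finset.nonempty_Iic (fun j => |T^[k] y j|) ≤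
        C ^ k * (Finset.Iic m).sup' Finset.nonempty_Iic (fun j => |y j|) := by
    intro k
    induction k with
    | zero => intro y hy; simp
    | succ k ih =>
      intro y hy
      have h1 : T^[k+1] y = T^[k] (T y) := Function.iterate_succ_apply T k y
      rw [h1]
      calc (Finset.Iic m).sup' Finset.nonempty_Iic (fun j => |T^[k] (T y) j|)
          ≤ C ^ k * (Finset.Iic m).sup' Finset.nonempty_Iic (fun j => |T y j|) :=
            ih (T y) (hTsupp y)
        _ ≤ C ^ k * (C * (Finset.Iic m).sup' Finset.nonempty_Iic (fun j => |y j|)) := by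
            apply mul_le_mul_of_nonneg_left (hstep y hy) (pow_nonneg hC0 k)
        _ = C ^ (k+1) * (Finset.Iic m).sup' Finset.nonempty_Iic (fun j => |y j|) := by
            ring
  refine ⟨m, C + 1, by linarith, ?_⟩
  intro k x
  set q := (Finset.Iic m).sup' Finset.nonempty_Iic (fun j => |x j|) with hq
  have hq0 : 0 ≤ q := by
    rw [hq]
    exact le_trans (abs_nonneg (x 0)) (Finset.le_sup' (fun j => |x j|) (Finset.mem_Iic.mpr (Nat.zero_le m)))
  have hπx : (Finset.Iic m).sup' Finset.nonempty_Iic (fun j => |π x j|) = q := by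
    apply Finset.sup'_congr _ rfl
    intro j hj
    simp [hπ, Finset.mem_Iic.mp hj]
  calc (Finset.Iic n).sup' Finset.nonempty_Iic (fun j => |(A ^ k) x j|)
      ≤ (Finset.Iic m).sup' Finset.nonempty_Iic (fun j => |T^[k] (π x) j|) := by
        apply Finset.sup'_le
        intro j hj
        have hjn : j ≤ n := Finset.mem_Iic.mp hj
        rw [key k x j hjn]
        exact Finset.le_sup' (fun j => |T^[k] (π x) j|) (Finset.mem_Iic.mpr (le_trans hjn hnm))
    _ ≤ C ^ k * q := by
        have := hiter k (π x) (hπF x)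
        rwa [hπx] at this
    _ ≤ (C + 1) ^ k * q := by
        apply mul_le_mul_of_nonneg_right _ hq0
        exact pow_le_pow_left₀ hC0 (by linarith) k
end

section
/- Let ω = ℝ^ℕ carry the product topology and let A : ω → ω be the backward shift, A(x₀, x₁, x₂, …) = (x₁, x₂, x₃, …). Then A is a continuous linear operator on ω but A is not the generator of any strongly continuous semigroup on ω. -/
open Filter Topology Set

/-!
If a strongly continuous semigroup `T` had the backward shift as generator, the coordinates
`u k t = (T t eₖ) 0` of the orbits of the unit vectors would satisfy `u 0 t = 1` and
`u (k + 1)' = u k` (right derivatives, which together with continuity determine a function), so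
`u k t = t ^ k / k!`. Then `k! • eₖ → 0` in `ℕ → ℝ` while `(T 1 (k! • eₖ)) 0 = 1`, contradicting the
continuity of `T 1`.
-/

open Nat in
theorem hasDerivAt_pow_succ_div_factorial (k : ℕ) (t : ℝ) :
    HasDerivAt (fun s : ℝ ↦ s ^ (k + 1) / (k + 1)!) (t ^ k / k !) t := by
  refine ((hasDerivAt_pow (k + 1) t).div_const _).congr_deriv ?_
  rw [Nat.factorial_succ]
  push_cast
  field_simp

theorem hasDerivWithinAt_Ici_iff_tendsto_slope_zero_right {F : Type*} [NormedAddCommGroup F]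
    [NormedSpace ℝ F] {f : ℝ → F} {f' : F} {x : ℝ} :
    HasDerivWithinAt f f' (Ici x) x ↔
      Tendsto (fun t ↦ t⁻¹ • (f (x + t) - f x)) (𝓝[>] 0) (𝓝 f') := by
  have : 𝓝[>] x = map (fun t ↦ x + t) (𝓝[>] 0) := by simp
  rw [hasDerivWithinAt_iff_tendsto_slope, Ici_sdiff_left, this, tendsto_map'_iff]
  simp [slope, Function.comp_def]

theorem tendsto_piSingle_atTop_zero {β : Type*} [Zero β] [TopologicalSpace β] (c : ℕ → β) :
    Tendsto (fun n ↦ (Pi.single n (c n) : ℕ → β)) atTop (𝓝 0) :=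
  tendsto_pi_nhds.2 fun j ↦ tendsto_atTop_of_eventually_const (i₀ := j + 1) fun n hn ↦ by
    simp [show j ≠ n by omega]

theorem hasDerivWithinAt_semigroup_orbit_apply {E : Type*} [AddCommGroup E] [Module ℝ E]
    [TopologicalSpace E] {T : ℝ → E →L[ℝ] E} {A : E → E}
    (hsemi : ∀ s t : ℝ, 0 ≤ s → 0 ≤ t → T (s + t) = (T s).comp (T t))
    (hgen : ∀ x, Tendsto (fun h : ℝ ↦ h⁻¹ • (T h x - x)) (𝓝[>] 0) (𝓝 (A x)))
    (φ : E →L[ℝ] ℝ) (x : E) {t : ℝ} (ht : 0 ≤ t) :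
    HasDerivWithinAt (fun s ↦ φ (T s x)) (φ (T t (A x))) (Ici t) t := by
  rw [hasDerivWithinAt_Ici_iff_tendsto_slope_zero_right]
  refine (((φ.comp (T t)).continuous.tendsto (A x)).comp (hgen x)).congr' ?_
  filter_upwards [self_mem_nhdsWithin] with h (hh : 0 < h)
  simp [hsemi t h ht hh.le]

def backwardShift : (ℕ → ℝ) →L[ℝ] (ℕ → ℝ) :=
  ContinuousLinearMap.pi fun j ↦ ContinuousLinearMap.proj (j + 1)

@[simp]
theorem backwardShift_apply (x : ℕ → ℝ) (j : ℕ) : backwardShift x j = x (j + 1) := rfl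

@[simp]
theorem backwardShift_single_zero (a : ℝ) : backwardShift (Pi.single 0 a) = 0 := by
  ext j; simp

@[simp]
theorem backwardShift_single_succ (k : ℕ) (a : ℝ) :
    backwardShift (Pi.single (k + 1) a) = Pi.single k a := by
  ext j; simp [Pi.single_apply]

open Nat in
theorem orbit_single_apply_zero_eq_pow_div_factorial {T : ℝ → (ℕ → ℝ) →L[ℝ] (ℕ → ℝ)}
    (hT0 : T 0 = ContinuousLinearMap.id ℝ (ℕ → ℝ))
    (hsemi : ∀ s t : ℝ, 0 ≤ s → 0 ≤ t → T (s + t) = (T s).comp (T t))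
    (hcont : ∀ x, ContinuousOn (fun t ↦ T t x) (Ici 0))
    (hgen : ∀ x, Tendsto (fun h : ℝ ↦ h⁻¹ • (T h x - x)) (𝓝[>] 0) (𝓝 (backwardShift x)))
    (k : ℕ) {t : ℝ} (ht : 0 ≤ t) : T t (Pi.single k 1) 0 = t ^ k / k ! := by
  have hderiv := fun x s (hs : 0 ≤ s) ↦
    hasDerivWithinAt_semigroup_orbit_apply hsemi hgen (ContinuousLinearMap.proj 0) x hs
  have horbit (x : ℕ → ℝ) (t : ℝ) : ContinuousOn (fun s ↦ T s x 0) (Icc 0 t) :=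
    ((continuous_apply 0).comp_continuousOn (hcont x)).mono Icc_subset_Ici_self
  induction k generalizing t with
  | zero =>
    refine eq_of_has_deriv_right_eq (fun s hs ↦ ?_) (fun s _ ↦ hasDerivWithinAt_const s _ 1)
      (horbit _ t) continuousOn_const (by simp [hT0]) t ⟨ht, le_rfl⟩ |>.trans (by simp)
    simpa using hderiv (Pi.single 0 1) s hs.1
  | succ k ih =>
    refine eq_of_has_deriv_right_eq (fun s hs ↦ ?_)
      (fun s _ ↦ (hasDerivAt_pow_succ_div_factorial k s).hasDerivWithinAt) (horbit _ t)
      (by fun_prop) (by simp [hT0]) t ⟨ht, le_rfl⟩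
    simpa [ih hs.1] using hderiv (Pi.single (k + 1) 1) s hs.1

/-- The backward shift `A x = (x₁, x₂, x₃, …)` is a continuous
linear operator on `ω = ℝ^ℕ`, but it is not the generator of any strongly
continuous semigroup on `ω`. -/
theorem stmt9 (A : (ℕ → ℝ) → (ℕ → ℝ))
    (hA : ∀ (x : ℕ → ℝ) (j : ℕ), A x j = x (j + 1)) :
    (IsLinearMap ℝ A ∧ Continuous A) ∧
    ¬ ∃ T : ℝ → (ℕ → ℝ) →L[ℝ] (ℕ → ℝ),
        T 0 = ContinuousLinearMap.id ℝ (ℕ → ℝ) ∧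
        (∀ s t : ℝ, 0 ≤ s → 0 ≤ t → T (s + t) = (T s).comp (T t)) ∧
        (∀ x : ℕ → ℝ, ContinuousOn (fun t : ℝ => T t x) (Set.Ici 0)) ∧
        ∀ x : ℕ → ℝ,
          Tendsto (fun h : ℝ => h⁻¹ • (T h x - x)) (𝓝[>] 0) (𝓝 (A x)) := by
  obtain rfl : A = backwardShift := funext fun x ↦ funext (hA x)
  refine ⟨⟨backwardShift.toLinearMap.isLinear, backwardShift.continuous⟩, ?_⟩
  rintro ⟨T, hT0, hsemi, hcont, hgen⟩
  have hvalue (n : ℕ) : T 1 (Pi.single n (n.factorial : ℝ)) 0 = 1 := by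
    have hsingle : Pi.single n (n.factorial : ℝ) = (n.factorial : ℝ) • Pi.single n 1 := by
      rw [← Pi.single_smul, smul_eq_mul, mul_one]
    rw [hsingle, map_smul, Pi.smul_apply,
      orbit_single_apply_zero_eq_pow_div_factorial hT0 hsemi hcont hgen n zero_le_one]
    simp [Nat.factorial_ne_zero]
  have hlim : Tendsto (fun n : ℕ ↦ T 1 (Pi.single n (n.factorial : ℝ)) 0) atTop (𝓝 (T 1 0 0)) :=
    (((continuous_apply 0).comp (T 1).continuous).tendsto 0).comp
      (tendsto_piSingle_atTop_zero _)
  simp only [hvalue, map_zero, Pi.zero_apply] at hlim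
  exact one_ne_zero (tendsto_nhds_unique tendsto_const_nhds hlim)
end

section
/- For the differentiation operator on entire functions there is no exponential norm estimate between sup-norms on discs: there do not exist m ∈ ℕ and λ > 0 such that for every entire function f : ℂ → ℂ and every k ∈ ℕ one has sup_{|z| ≤ 1} |f^{(k)}(z)| ≤ λ^k · sup_{|z| ≤ m} |f(z)|. -/
open Set Metric

/-!
Test the estimate on `f = exp (c · z)` with `c > λ`: its `k`-th derivative at `0` has modulus
`c ^ k`, while `sup_{|z| ≤ m} |f| ≤ exp (c m)`. The estimate would give `c ^ k ≤ λ ^ k exp (c m)`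
for every `k`, which fails for large `k` since `c / λ > 1`.
-/

lemma norm_le_iSup_closedBall {E F : Type*} [PseudoMetricSpace E] [ProperSpace E]
    [NormedAddCommGroup F] {g : E → F} {a z : E} {r : ℝ} (hg : ContinuousOn g (closedBall a r))
    (hz : z ∈ closedBall a r) : ‖g z‖ ≤ ⨆ w : closedBall a r, ‖g w‖ := by
  have hbdd : BddAbove (range fun w : closedBall a r => ‖g w‖) := by
    rw [← image_eq_range (fun w => ‖g w‖)]
    exact (isCompact_closedBall a r).bddAbove_image hg.norm
  exact le_ciSup hbdd ⟨z, hz⟩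

lemma iSup_closedBall_norm_cexp_const_mul_le (c : ℂ) {r : ℝ} (hr : 0 ≤ r) :
    ⨆ z : closedBall (0 : ℂ) r, ‖Complex.exp (c * z)‖ ≤ Real.exp (‖c‖ * r) := by
  have : Nonempty (closedBall (0 : ℂ) r) := ⟨⟨0, mem_closedBall_self hr⟩⟩
  refine ciSup_le fun ⟨z, hz⟩ => (Complex.norm_exp_le_exp_norm _).trans (Real.exp_le_exp.2 ?_)
  rw [norm_mul]
  exact mul_le_mul_of_nonneg_left (mem_closedBall_zero_iff.1 hz) (norm_nonneg c)

lemma norm_pow_le_iSup_closedBall_iteratedDeriv_cexp_const_mul (c : ℂ) (k : ℕ) {r : ℝ}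
    (hr : 0 ≤ r) :
    ‖c‖ ^ k ≤ ⨆ z : closedBall (0 : ℂ) r, ‖iteratedDeriv k (fun s => Complex.exp (c * s)) z‖ := by
  rw [iteratedDeriv_cexp_const_mul]
  simpa using norm_le_iSup_closedBall (g := fun s => c ^ k * Complex.exp (c * s))
    (by fun_prop) (mem_closedBall_self (x := 0) hr)

lemma not_forall_pow_le_mul_pow {a b : ℝ} (ha : 0 < a) (hab : a < b) (C : ℝ) :
    ¬ ∀ k : ℕ, b ^ k ≤ a ^ k * C := by
  intro h
  obtain ⟨k, hk⟩ := pow_unbounded_of_one_lt C ((one_lt_div ha).2 hab)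
  rw [div_pow, lt_div_iff₀ (pow_pos ha k)] at hk
  linarith [h k]

/-- There do not exist `m ∈ ℕ` and `λ > 0` such that every
entire function `f` satisfies
`sup_{|z| ≤ 1} |f^{(k)}(z)| ≤ λ^k · sup_{|z| ≤ m} |f(z)|` for all `k`. -/
theorem stmt14 :
    ¬ ∃ (m : ℕ) (lam : ℝ), 0 < lam ∧
        ∀ f : ℂ → ℂ, Differentiable ℂ f → ∀ k : ℕ,
          (⨆ z : Metric.closedBall (0 : ℂ) 1, ‖iteratedDeriv k f z‖) ≤
            lam ^ k * ⨆ z : Metric.closedBall (0 : ℂ) (m : ℝ), ‖f z‖ := by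
  rintro ⟨m, lam, hlam, H⟩
  set c : ℂ := ((lam + 1 : ℝ) : ℂ)
  have hc : lam < ‖c‖ := by
    rw [Complex.norm_real, Real.norm_of_nonneg (by positivity)]
    exact lt_add_one lam
  refine not_forall_pow_le_mul_pow hlam hc (Real.exp (‖c‖ * m)) fun k => ?_
  calc ‖c‖ ^ k
      ≤ ⨆ z : closedBall (0 : ℂ) 1, ‖iteratedDeriv k (fun s => Complex.exp (c * s)) z‖ :=
        norm_pow_le_iSup_closedBall_iteratedDeriv_cexp_const_mul c k zero_le_one
    _ ≤ lam ^ k * ⨆ z : closedBall (0 : ℂ) m, ‖Complex.exp (c * z)‖ := H _ (by fun_prop) k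
    _ ≤ lam ^ k * Real.exp (‖c‖ * m) := by
        gcongr
        exact iSup_closedBall_norm_cexp_const_mul_le c m.cast_nonneg
end

section
/- Let (X_n)_{n∈ℕ} be a sequence of real Banach spaces and let X = ∏_{n∈ℕ} X_n carry the product topology. Let (T_t)_{t≥0} be a uniformly continuous semigroup of continuous linear operators on X, i.e., a strongly continuous semigroup such that T_h → id uniformly on every (von Neumann) bounded subset of X as h → 0⁺. Then its generator A is everywhere defined and continuous linear (A x = lim_{h→0⁺} h⁻¹ • (T_h x − x) exists for every x ∈ X and A ∈ L(X)), and for every x ∈ X and t ≥ 0 one has T_t x = ∑_{k=0}^∞ (t^k / k!) • A^k x, the series converging in the product topology. -/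
/-!
By Banach–Steinhaus on the Fréchet space `∏ Xᵢ`, the `m`-th coordinate of `T_t x`, `t ∈ [0, 1]`,
only depends on the coordinates of `x` in a finite set `G ∋ m`. Compress everything to the Banach
space `Y = ∏_{i ∈ G} Xᵢ`. Uniform continuity of `T` on bounded sets says that the compressions of
`T_s` tend to `1` in norm, hence so do the averages `W_t = t⁻¹ ∫₀ᵗ T_s ds`, and some `W_{t₀}` is
invertible. Since `∫₀ᵗ (T_{s+h} - T_s) ds` is symmetric in `h` and `t`, the `m`-th row `Φ_h` of
`h⁻¹ (T_h - 1)` satisfies `Φ_h W_t = Φ_t W_h`, so `Φ_h = Φ_{t₀} W_h W_{t₀}⁻¹ → Φ_{t₀} W_{t₀}⁻¹`.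
These rows assemble into the continuous generator `A`.

For the series, `(A^k x)_m` is the `k`-th right derivative at `0` of `s ↦ (T_s x)_m`, so it only
sees `x` on `G`; hence `(A^k x)_m` is the `m`-th coordinate of `B^k (x|_G)` for the compression `B`
of `A`. Together with `T_s A = A T_s`, this geometric growth bounds the Taylor remainder of
`s ↦ (T_s x)_m` on `[0, t]` by `M (‖B‖ t)^N / N!`, where `M` bounds `(T_s x)|_G` for `s ∈ [0, t]`.
-/

open Filter Topology Set

noncomputable section

namespace ProductSemigroup

variable {ι : Type*} {X : ι → Type*} [∀ i, NormedAddCommGroup (X i)] [∀ i, NormedSpace ℝ (X i)]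

section Coordinates

def restrictL (G : Finset ι) : (∀ i, X i) →L[ℝ] (∀ i : G, X i) :=
  ContinuousLinearMap.pi fun i => ContinuousLinearMap.proj (i : ι)

open Classical in
def extendL (G : Finset ι) : (∀ i : G, X i) →L[ℝ] (∀ i, X i) :=
  ContinuousLinearMap.pi fun i =>
    if h : i ∈ G then ContinuousLinearMap.proj (φ := fun j : G => X j) ⟨i, h⟩ else 0

variable {G : Finset ι}

@[simp] lemma restrictL_apply (x : ∀ i, X i) (i : G) : restrictL G x i = x i := rfl

lemma extendL_apply_of_mem (u : ∀ i : G, X i) {i : ι} (hi : i ∈ G) :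
    extendL G u i = u ⟨i, hi⟩ := by
  simp [extendL, hi]

@[simp] lemma restrictL_extendL (u : ∀ i : G, X i) : restrictL G (extendL G u) = u := by
  ext i
  exact extendL_apply_of_mem u i.2

lemma extendL_restrictL_apply_of_mem (x : ∀ i, X i) {i : ι} (hi : i ∈ G) :
    extendL G (restrictL G x) i = x i :=
  extendL_apply_of_mem _ hi

lemma norm_apply_le_norm_restrictL (x : ∀ i, X i) {i : ι} (hi : i ∈ G) :
    ‖x i‖ ≤ ‖restrictL G x‖ :=
  norm_le_pi_norm (restrictL G x) ⟨i, hi⟩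

lemma apply_extendL_restrictL_of_dependsOn {β : Type*} {f : (∀ i, X i) → β}
    (hf : DependsOn f G) (x : ∀ i, X i) : f (extendL G (restrictL G x)) = f x :=
  hf fun _ hi => extendL_restrictL_apply_of_mem x hi

lemma dependsOn_of_norm_le {E : Type*} [NormedAddCommGroup E] [NormedSpace ℝ E]
    {L : (∀ i, X i) →L[ℝ] E} {C : ℝ} (hL : ∀ x, ‖L x‖ ≤ C * ‖restrictL G x‖) :
    DependsOn L G := by
  intro x y hxy
  have h : restrictL G (x - y) = 0 := by
    ext i
    simpa [sub_eq_zero] using hxy i i.2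
  simpa [sub_eq_zero, h] using hL (x - y)

end Coordinates

section UniformBoundedness

variable [Countable ι] [∀ i, CompleteSpace (X i)]

theorem banach_steinhaus_restrictL {κ E : Type*} [NormedAddCommGroup E] [NormedSpace ℝ E]
    (f : κ → (∀ i, X i) →L[ℝ] E) (hf : ∀ x, ∃ C, ∀ k, ‖f k x‖ ≤ C) :
    ∃ (G : Finset ι) (C : ℝ), ∀ k x, ‖f k x‖ ≤ C * ‖restrictL G x‖ := by
  classical
  have hequi := (norm_withSeminorms ℝ E).banach_steinhaus (𝓕 := f) fun _ x => by
    obtain ⟨C, hC⟩ := hf x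
    exact ⟨C, by rintro _ ⟨k, rfl⟩; exact hC k⟩
  obtain ⟨p, hp, hfp⟩ :=
    ((norm_withSeminorms ℝ E).uniformEquicontinuous_iff_exists_continuous_seminorm
      (fun k => (f k).toLinearMap)).1 hequi 0
  obtain ⟨s, C, -, hpC⟩ :=
    Seminorm.bound_of_continuous (withSeminorms_pi fun i => norm_withSeminorms ℝ (X i)) p hp
  refine ⟨s.image Sigma.fst, C, fun k x => (hfp k x).trans ((hpC x).trans ?_)⟩
  refine mul_le_mul_of_nonneg_left (Seminorm.finset_sup_apply_le (norm_nonneg _) ?_) C.2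
  rintro ⟨i, j⟩ hi
  exact norm_apply_le_norm_restrictL x (Finset.mem_image_of_mem Sigma.fst hi)

end UniformBoundedness

section StrongIntegral

variable {E F : Type*} [NormedAddCommGroup E] [NormedSpace ℝ E] [CompleteSpace E]
  [NormedAddCommGroup F] [NormedSpace ℝ F]

open Classical in
def strongIntervalIntegral (Q : ℝ → E →L[ℝ] F) (a b : ℝ) : E →L[ℝ] F :=
  if hQ : ∀ u, ContinuousOn (fun s => Q s u) (uIcc a b) then
    LinearMap.mkContinuousOfExistsBound
      { toFun := fun u => ∫ s in a..b, Q s u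
        map_add' := fun u v => by
          simp only [map_add]
          exact intervalIntegral.integral_add (hQ u).intervalIntegrable (hQ v).intervalIntegrable
        map_smul' := fun c u => by
          simp only [map_smul, RingHom.id_apply]
          exact intervalIntegral.integral_smul c _ }
      (by
        obtain ⟨C, hC⟩ := banach_steinhaus (g := fun s : uIcc a b => Q s) fun u =>
          (isCompact_uIcc.exists_bound_of_continuousOn (hQ u)).imp fun C hC s => hC s s.2
        refine ⟨C * |b - a|, fun u => ?_⟩
        calc ‖∫ s in a..b, Q s u‖ ≤ C * ‖u‖ * |b - a| :=
              intervalIntegral.norm_integral_le_of_norm_le_const fun s hs =>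
                (Q s).le_of_opNorm_le (hC ⟨s, uIoc_subset_uIcc hs⟩) u
          _ = C * |b - a| * ‖u‖ := by ring)
  else 0

lemma strongIntervalIntegral_apply {Q : ℝ → E →L[ℝ] F} {a b : ℝ}
    (hQ : ∀ u, ContinuousOn (fun s => Q s u) (uIcc a b)) (u : E) :
    strongIntervalIntegral Q a b u = ∫ s in a..b, Q s u := by
  rw [strongIntervalIntegral, dif_pos hQ]
  rfl

theorem tendsto_smul_strongIntervalIntegral [CompleteSpace F] {Q : ℝ → E →L[ℝ] F}
    {Q₀ : E →L[ℝ] F} (hQc : ∀ u, ContinuousOn (fun s => Q s u) (Ici 0))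
    (hQ : Tendsto Q (𝓝[>] 0) (𝓝 Q₀)) :
    Tendsto (fun t => t⁻¹ • strongIntervalIntegral Q 0 t) (𝓝[>] 0) (𝓝 Q₀) := by
  rw [Metric.tendsto_nhds]
  intro ε hε
  obtain ⟨δ, hδ, hδQ⟩ :=
    (nhdsGT_basis (0 : ℝ)).mem_iff.1 (Metric.tendsto_nhds.1 hQ (ε / 2) (half_pos hε))
  filter_upwards [Ioo_mem_nhdsGT hδ] with t ht
  have hsub : uIcc 0 t ⊆ Ici 0 := by
    rw [uIcc_of_le ht.1.le]
    exact Icc_subset_Ici_self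
  rw [dist_eq_norm]
  refine lt_of_le_of_lt (ContinuousLinearMap.opNorm_le_bound _ (half_pos hε).le fun u => ?_)
    (half_lt_self hε)
  have hint : ∫ s in (0 : ℝ)..t, (Q s u - Q₀ u) = (∫ s in (0 : ℝ)..t, Q s u) - t • Q₀ u := by
    rw [intervalIntegral.integral_sub ((hQc u).mono hsub).intervalIntegrable
      intervalIntegrable_const, intervalIntegral.integral_const, sub_zero]
  have hbound : ‖∫ s in (0 : ℝ)..t, (Q s u - Q₀ u)‖ ≤ ε / 2 * ‖u‖ * |t - 0| := by
    refine intervalIntegral.norm_integral_le_of_norm_le_const fun s hs => ?_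
    rw [uIoc_of_le ht.1.le] at hs
    have hs' : s ∈ Ioo 0 δ := ⟨hs.1, hs.2.trans_lt ht.2⟩
    rw [← sub_apply]
    have hQs := hδQ hs'
    simp only [mem_ofPred_eq, dist_eq_norm] at hQs
    exact (Q s - Q₀).le_of_opNorm_le hQs.le u
  rw [sub_zero, abs_of_pos ht.1, hint] at hbound
  rw [sub_apply, smul_apply,
    strongIntervalIntegral_apply fun v => (hQc v).mono hsub]
  calc ‖(t⁻¹ • ∫ s in (0 : ℝ)..t, Q s u) - Q₀ u‖
      = t⁻¹ * ‖(∫ s in (0 : ℝ)..t, Q s u) - t • Q₀ u‖ := by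
        rw [← norm_smul_of_nonneg (inv_nonneg.2 ht.1.le), smul_sub, smul_smul,
          inv_mul_cancel₀ ht.1.ne', one_smul]
    _ ≤ t⁻¹ * (ε / 2 * ‖u‖ * t) := mul_le_mul_of_nonneg_left hbound (inv_nonneg.2 ht.1.le)
    _ = ε / 2 * ‖u‖ := by field_simp [ht.1.ne']

end StrongIntegral

theorem intervalIntegral_comp_add_sub_comm {E : Type*} [NormedAddCommGroup E] [NormedSpace ℝ E]
    {g : ℝ → E} (hg : ContinuousOn g (Ici 0)) {h t : ℝ} (hh : 0 ≤ h) (ht : 0 ≤ t) :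
    ∫ s in (0 : ℝ)..t, (g (s + h) - g s) = ∫ s in (0 : ℝ)..h, (g (s + t) - g s) := by
  have hint : ∀ a b : ℝ, 0 ≤ a → 0 ≤ b → IntervalIntegrable g MeasureTheory.volume a b :=
    fun a b ha hb => (hg.mono fun s hs => (le_min ha hb).trans hs.1).intervalIntegrable
  have hshift : ∀ a b : ℝ, 0 ≤ a → 0 ≤ b →
      ∫ s in (0 : ℝ)..a, (g (s + b) - g s)
        = ((∫ s in (0 : ℝ)..(a + b), g s) - ∫ s in (0 : ℝ)..b, g s) - ∫ s in (0 : ℝ)..a, g s := by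
    intro a b ha hb
    have hshifted : IntervalIntegrable (fun s => g (s + b)) MeasureTheory.volume 0 a := by
      simpa using (hint b (a + b) hb (by linarith)).comp_add_right b
    rw [intervalIntegral.integral_sub hshifted (hint 0 a le_rfl ha),
      intervalIntegral.integral_comp_add_right, zero_add,
      ← intervalIntegral.integral_add_adjacent_intervals (hint 0 b le_rfl hb)
        (hint b (a + b) hb (by linarith))]
    abel
  rw [hshift t h ht hh, hshift h t hh ht, add_comm h t]
  abel

section Taylor

open scoped Nat

variable {F : Type*} [NormedAddCommGroup F] [NormedSpace ℝ F]

theorem hasDerivAt_pow_succ_div_factorial (N : ℕ) (s : ℝ) :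
    HasDerivAt (fun s : ℝ => s ^ (N + 1) / (N + 1)!) (s ^ N / N !) s := by
  refine ((hasDerivAt_pow (N + 1) s).div_const _).congr_deriv ?_
  rw [Nat.factorial_succ]
  push_cast
  field_simp

theorem hasDerivAt_sum_pow_div_factorial_smul (c : ℕ → F) (N : ℕ) (s : ℝ) :
    HasDerivAt (fun s : ℝ => ∑ k ∈ Finset.range (N + 1), (s ^ k / k !) • c k)
      (∑ k ∈ Finset.range N, (s ^ k / k !) • c (k + 1)) s := by
  induction N with
  | zero => simpa using hasDerivAt_const s (c 0)
  | succ N ih =>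
    have hsplit : (fun s : ℝ => ∑ k ∈ Finset.range (N + 1 + 1), (s ^ k / k !) • c k)
        = fun s : ℝ => (∑ k ∈ Finset.range (N + 1), (s ^ k / k !) • c k)
          + (s ^ (N + 1) / (N + 1)!) • c (N + 1) :=
      funext fun s => Finset.sum_range_succ _ _
    rw [hsplit, Finset.sum_range_succ]
    exact ih.add ((hasDerivAt_pow_succ_div_factorial N s).smul_const (c (N + 1)))

theorem norm_sub_sum_pow_div_factorial_smul_le {f : ℕ → ℝ → F} {t M a : ℝ}
    (hcont : ∀ j, ContinuousOn (f j) (Icc 0 t))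
    (hderiv : ∀ j, ∀ s ∈ Ico 0 t, HasDerivWithinAt (f j) (f (j + 1) s) (Ici s) s)
    (hbound : ∀ j, ∀ s ∈ Icc 0 t, ‖f j s‖ ≤ M * a ^ j) (N j : ℕ) {s : ℝ} (hs : s ∈ Icc 0 t) :
    ‖f j s - ∑ k ∈ Finset.range N, (s ^ k / k !) • f (j + k) 0‖
      ≤ M * a ^ (j + N) * (s ^ N / N !) := by
  induction N generalizing j s with
  | zero => simpa using hbound j s hs
  | succ N ih =>
    refine image_norm_le_of_norm_deriv_right_le_deriv_boundary
      (f := fun s => f j s - ∑ k ∈ Finset.range (N + 1), (s ^ k / k !) • f (j + k) 0)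
      (f' := fun s => f (j + 1) s - ∑ k ∈ Finset.range N, (s ^ k / k !) • f (j + 1 + k) 0)
      (B' := fun s => M * a ^ (j + (N + 1)) * (s ^ N / N !)) ?_ (fun s hs => ?_) ?_
      (fun s => (hasDerivAt_pow_succ_div_factorial N s).const_mul _) (fun s hs => ?_) hs
    · exact (hcont j).sub (by fun_prop)
    · refine ((hderiv j s hs).sub
        (hasDerivAt_sum_pow_div_factorial_smul _ N s).hasDerivWithinAt).congr_deriv ?_
      simp only [add_assoc, add_comm 1]
    · simp [Finset.sum_range_succ']
    · simpa only [add_assoc, add_comm 1 N] using ih (j + 1) (Ico_subset_Icc_self hs)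

end Taylor

theorem norm_pow_apply_le {E : Type*} [NormedAddCommGroup E] [NormedSpace ℝ E] (B : E →L[ℝ] E)
    (v : E) (j : ℕ) : ‖(B ^ j) v‖ ≤ ‖B‖ ^ j * ‖v‖ := by
  induction j with
  | zero => simp
  | succ j ih =>
    rw [pow_succ', mul_apply_eq_comp, pow_succ', mul_assoc]
    exact (B.le_opNorm _).trans (mul_le_mul_of_nonneg_left ih (norm_nonneg B))

def compressL (G : Finset ι) (L : (∀ i, X i) →L[ℝ] (∀ i, X i)) :
    (∀ i : G, X i) →L[ℝ] (∀ i : G, X i) :=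
  restrictL G ∘L L ∘L extendL G

@[simp] lemma compressL_one (G : Finset ι) : compressL (X := X) G 1 = 1 := by
  ext u : 1
  simp [compressL]

section Semigroup

variable (T : ℝ → (∀ i, X i) →L[ℝ] (∀ i, X i))
  (hTadd : ∀ s t : ℝ, 0 ≤ s → 0 ≤ t → T (s + t) = (T s).comp (T t))
  (horbit : ∀ x : ∀ i, X i, ContinuousOn (fun t : ℝ => T t x) (Ici 0))
  (hunif : ∀ B : Set (∀ i, X i), Bornology.IsVonNBounded ℝ B →
    TendstoUniformlyOn (fun (h : ℝ) (x : ∀ i, X i) => T h x) (fun x => x) (𝓝[>] 0) B)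

include horbit in
theorem exists_finset_dependsOn_apply [Countable ι] [∀ i, CompleteSpace (X i)] (m : ι) (τ : ℝ) :
    ∃ G : Finset ι, m ∈ G ∧ ∀ t ∈ Icc 0 τ, DependsOn (fun x => T t x m) G := by
  classical
  obtain ⟨G, C, hC⟩ := banach_steinhaus_restrictL
    (fun t : Icc 0 τ => ContinuousLinearMap.proj (R := ℝ) (φ := X) m ∘L T t) fun x =>
      (isCompact_Icc.exists_bound_of_continuousOn ((continuous_apply m).comp_continuousOn
        ((horbit x).mono Icc_subset_Ici_self))).imp fun C hC t => hC t t.2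
  refine ⟨insert m G, Finset.mem_insert_self m G, fun t ht => ?_⟩
  exact (dependsOn_of_norm_le fun x => hC ⟨t, ht⟩ x).mono
    (Finset.coe_subset.2 (Finset.subset_insert m G))

def rowDiffQuotient (m : ι) (G : Finset ι) (h : ℝ) : (∀ i : G, X i) →L[ℝ] X m :=
  h⁻¹ • (ContinuousLinearMap.proj m ∘L (T h - 1) ∘L extendL G)

def compressedAverage [∀ i, CompleteSpace (X i)] (G : Finset ι) (t : ℝ) :
    (∀ i : G, X i) →L[ℝ] (∀ i : G, X i) :=
  t⁻¹ • strongIntervalIntegral (fun s => compressL G (T s)) 0 t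

variable {T} {m : ι} {G : Finset ι}

lemma rowDiffQuotient_restrictL (hm : m ∈ G) {h : ℝ} (hG : DependsOn (fun x => T h x m) G)
    (x : ∀ i, X i) : rowDiffQuotient T m G h (restrictL G x) = h⁻¹ • (T h x m - x m) := by
  simp only [rowDiffQuotient, smul_apply, ContinuousLinearMap.comp_apply, sub_apply,
    one_apply_eq_self, ContinuousLinearMap.proj_apply, Pi.sub_apply,
    apply_extendL_restrictL_of_dependsOn hG, extendL_restrictL_apply_of_mem x hm]

include hTadd horbit in
lemma rowDiffQuotient_compressedAverage [∀ i, CompleteSpace (X i)] (hm : m ∈ G) {h t : ℝ}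
    (hG : DependsOn (fun x => T h x m) G) (hh : 0 ≤ h) (ht : 0 ≤ t) (u : ∀ i : G, X i) :
    rowDiffQuotient T m G h (compressedAverage T G t u)
      = (h⁻¹ * t⁻¹) • ∫ s in (0 : ℝ)..t, (T (s + h) (extendL G u) m - T s (extendL G u) m) := by
  set x := extendL G u
  have hcont : ∀ v, ContinuousOn (fun s => compressL G (T s) v) (uIcc 0 t) := fun v =>
    (restrictL G).continuous.comp_continuousOn
      ((horbit _).mono (by rw [uIcc_of_le ht]; exact Icc_subset_Ici_self))
  set Ψ := ContinuousLinearMap.proj (R := ℝ) (φ := X) m ∘L (T h - 1) ∘L extendL G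
  have hΨ : ∀ s, 0 ≤ s → Ψ (compressL G (T s) u) = T (s + h) x m - T s x m := by
    intro s hs
    simp only [Ψ, compressL, ContinuousLinearMap.comp_apply, sub_apply, one_apply_eq_self,
      ContinuousLinearMap.proj_apply, Pi.sub_apply, apply_extendL_restrictL_of_dependsOn hG,
      extendL_restrictL_apply_of_mem _ hm, add_comm s h, hTadd h s hh hs]
    rfl
  rw [compressedAverage, smul_apply, strongIntervalIntegral_apply hcont,
    rowDiffQuotient, smul_apply, map_smul, smul_smul,
    ← ContinuousLinearMap.intervalIntegral_comp_comm Ψ (hcont u).intervalIntegrable]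
  congr 1
  refine intervalIntegral.integral_congr fun s hs => hΨ s ?_
  rw [uIcc_of_le ht] at hs
  exact hs.1

include hTadd horbit in
theorem rowDiffQuotient_comp_compressedAverage_comm [∀ i, CompleteSpace (X i)] (hm : m ∈ G)
    (hG : ∀ t ∈ Icc 0 1, DependsOn (fun x => T t x m) G) {h t : ℝ} (hh : h ∈ Ioc 0 1)
    (ht : t ∈ Ioc 0 1) :
    rowDiffQuotient T m G h ∘L compressedAverage T G t
      = rowDiffQuotient T m G t ∘L compressedAverage T G h := by
  ext u : 1
  have hg : ContinuousOn (fun s => T s (extendL G u) m) (Ici 0) :=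
    (continuous_apply m).comp_continuousOn (horbit _)
  rw [ContinuousLinearMap.comp_apply, ContinuousLinearMap.comp_apply,
    rowDiffQuotient_compressedAverage hTadd horbit hm (hG h (Ioc_subset_Icc_self hh)) hh.1.le
      ht.1.le,
    rowDiffQuotient_compressedAverage hTadd horbit hm (hG t (Ioc_subset_Icc_self ht)) ht.1.le
      hh.1.le,
    intervalIntegral_comp_add_sub_comm hg hh.1.le ht.1.le, mul_comm]

include hunif in
theorem tendsto_compressL (G : Finset ι) :
    Tendsto (fun s => compressL G (T s)) (𝓝[>] 0) (𝓝 1) := by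
  have hT : Tendsto T (𝓝[>] 0) (𝓝 1) :=
    (UniformConvergenceCLM.tendsto_iff_tendstoUniformlyOn _ _ _).2 hunif
  have hcomp := ((ContinuousLinearMap.postcomp (∀ i : G, X i) (restrictL G)).continuous.comp
    (ContinuousLinearMap.precomp (∀ i, X i) (extendL (X := X) G)).continuous).tendsto
    (1 : (∀ i, X i) →L[ℝ] (∀ i, X i))
  rw [← compressL_one]
  exact hcomp.comp hT

include hTadd horbit hunif in
theorem exists_tendsto_rowDiffQuotient [∀ i, CompleteSpace (X i)] (hm : m ∈ G)
    (hG : ∀ t ∈ Icc 0 1, DependsOn (fun x => T t x m) G) :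
    ∃ Λ : (∀ i : G, X i) →L[ℝ] X m,
      ∀ u, Tendsto (fun h => rowDiffQuotient T m G h u) (𝓝[>] 0) (𝓝 (Λ u)) := by
  have hW : Tendsto (compressedAverage T G) (𝓝[>] 0) (𝓝 1) :=
    tendsto_smul_strongIntervalIntegral
      (fun u => (restrictL G).continuous.comp_continuousOn (horbit _)) (tendsto_compressL hunif G)
  obtain ⟨t₀, ⟨U, hU⟩, ht₀⟩ :=
    ((hW.eventually (Units.isOpen.mem_nhds isUnit_one)).and (Ioc_mem_nhdsGT zero_lt_one)).exists
  set V : (∀ i : G, X i) →L[ℝ] (∀ i : G, X i) := ↑U⁻¹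
  refine ⟨rowDiffQuotient T m G t₀ ∘L V, fun u => ?_⟩
  have hWu : Tendsto (fun h => compressedAverage T G h (V u)) (𝓝[>] 0) (𝓝 (V u)) := by
    simpa using hW.eval_const (V u)
  refine (((rowDiffQuotient T m G t₀).continuous.tendsto _).comp hWu).congr' ?_
  filter_upwards [Ioc_mem_nhdsGT zero_lt_one] with h hh
  have hUu : compressedAverage T G t₀ (V u) = u := by
    rw [← hU, ← mul_apply_eq_comp, U.mul_inv, one_apply_eq_self]
  rw [Function.comp_apply, ← ContinuousLinearMap.comp_apply,
    rowDiffQuotient_comp_compressedAverage_comm hTadd horbit hm hG ht₀ hh,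
    ContinuousLinearMap.comp_apply, hUu]

include hTadd horbit hunif in
theorem exists_generator [Countable ι] [∀ i, CompleteSpace (X i)] :
    ∃ A : (∀ i, X i) →L[ℝ] (∀ i, X i),
      ∀ x, Tendsto (fun h : ℝ => h⁻¹ • (T h x - x)) (𝓝[>] 0) (𝓝 (A x)) := by
  choose G hmG hG using fun m => exists_finset_dependsOn_apply T horbit m 1
  choose Λ hΛ using fun m => exists_tendsto_rowDiffQuotient hTadd horbit hunif (hmG m) (hG m)
  refine ⟨ContinuousLinearMap.pi fun m => Λ m ∘L restrictL (G m),
    fun x => tendsto_pi_nhds.2 fun m => (hΛ m (restrictL (G m) x)).congr' ?_⟩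
  filter_upwards [Ioc_mem_nhdsGT zero_lt_one] with h hh
  rw [rowDiffQuotient_restrictL (hmG m) (hG m h (Ioc_subset_Icc_self hh))]
  rfl

end Semigroup

section Generator

variable {T : ℝ → (∀ i, X i) →L[ℝ] (∀ i, X i)}
  (hT0 : T 0 = ContinuousLinearMap.id ℝ (∀ i, X i))
  (hTadd : ∀ s t : ℝ, 0 ≤ s → 0 ≤ t → T (s + t) = (T s).comp (T t))
  (horbit : ∀ x : ∀ i, X i, ContinuousOn (fun t : ℝ => T t x) (Ici 0))
  {A : (∀ i, X i) →L[ℝ] (∀ i, X i)}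
  (hA : ∀ x, Tendsto (fun h : ℝ => h⁻¹ • (T h x - x)) (𝓝[>] 0) (𝓝 (A x)))

include hTadd hA in
theorem commute_generator {s : ℝ} (hs : 0 ≤ s) : Commute (T s) A := by
  ext x : 1
  rw [mul_apply_eq_comp, mul_apply_eq_comp]
  refine tendsto_nhds_unique (((T s).continuous.tendsto _).comp (hA x)) ((hA (T s x)).congr' ?_)
  filter_upwards [self_mem_nhdsWithin] with h (hh : 0 < h)
  rw [Function.comp_apply, map_smul, map_sub, ← ContinuousLinearMap.comp_apply,
    ← ContinuousLinearMap.comp_apply, ← hTadd s h hs hh.le, ← hTadd h s hh.le hs, add_comm]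

include hTadd hA in
theorem hasDerivWithinAt_apply_orbit {t : ℝ} (ht : 0 ≤ t) (y : ∀ i, X i) (i : ι) :
    HasDerivWithinAt (fun s => T s y i) (T t (A y) i) (Ici t) t := by
  rw [← hasDerivWithinAt_Ioi_iff_Ici,
    hasDerivWithinAt_iff_tendsto_slope' (s := Ioi t) (lt_irrefl t)]
  have hshift : Tendsto (fun s => s - t) (𝓝[>] t) (𝓝[>] 0) := by
    simpa using ((continuous_sub_right t).continuousWithinAt (x := t)).tendsto_nhdsWithin
      (s := Ioi t) (t := Ioi (t - t)) fun s hs => sub_lt_sub_right hs t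
  refine ((((continuous_apply i).comp (T t).continuous).tendsto _).comp
    ((hA y).comp hshift)).congr' ?_
  filter_upwards [self_mem_nhdsWithin] with s (hs : t < s)
  have hsplit : T s = T t ∘L T (s - t) := by
    rw [← hTadd t (s - t) ht (by linarith), add_sub_cancel]
  simp [slope_def_module, hsplit]

include hT0 hTadd hA in
theorem pow_apply_eq_zero {ε : ℝ} (hε : 0 < ε) {x : ∀ i, X i} {m : ι}
    (hx : ∀ s ∈ Ico 0 ε, T s x m = 0) (k : ℕ) : (A ^ k) x m = 0 := by
  suffices h : ∀ k : ℕ, ∀ s ∈ Ico 0 ε, T s ((A ^ k) x) m = 0 by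
    simpa [hT0] using h k 0 ⟨le_rfl, hε⟩
  intro k
  induction k with
  | zero => simpa using hx
  | succ k ih =>
    intro s hs
    have hzero : HasDerivWithinAt (fun s => T s ((A ^ k) x) m) 0 (Ici s) s := by
      refine (hasDerivWithinAt_const s _ 0).congr_of_eventuallyEq ?_ (ih s hs)
      filter_upwards [Ico_mem_nhdsGE hs.2] with u hu
      exact ih u ⟨hs.1.trans hu.1, hu.2⟩
    rw [pow_succ', mul_apply_eq_comp]
    exact (uniqueDiffWithinAt_Ici s).eq_deriv _
      (hasDerivWithinAt_apply_orbit hTadd hA hs.1 _ m) hzero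

include hT0 hTadd hA in
theorem pow_apply_eq_compressL_pow {m : ι} {H : Finset ι} (hm : m ∈ H)
    (hH : ∀ s ∈ Icc 0 1, DependsOn (fun x => T s x m) H) (k : ℕ) (x : ∀ i, X i) :
    (A ^ k) x m = (compressL H A ^ k) (restrictL H x) ⟨m, hm⟩ := by
  induction k generalizing x with
  | zero => rfl
  | succ k ih =>
    have hsupp : (A ^ (k + 1)) x m = (A ^ (k + 1)) (extendL H (restrictL H x)) m := by
      rw [← sub_eq_zero, ← Pi.sub_apply, ← map_sub]
      refine pow_apply_eq_zero hT0 hTadd hA one_pos (fun s hs => ?_) _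
      simp only [map_sub, Pi.sub_apply,
        apply_extendL_restrictL_of_dependsOn (hH s (Ico_subset_Icc_self hs)), sub_self]
    rw [hsupp, pow_succ, mul_apply_eq_comp, ih, pow_succ, mul_apply_eq_comp]
    rfl

include hT0 hTadd hA in
theorem norm_apply_pow_orbit_le {m : ι} {H : Finset ι} (hm : m ∈ H)
    (hH : ∀ s ∈ Icc 0 1, DependsOn (fun x => T s x m) H) {x : ∀ i, X i} {t M : ℝ}
    (hM : ∀ s ∈ Icc 0 t, ‖restrictL H (T s x)‖ ≤ M) (j : ℕ) {s : ℝ} (hs : s ∈ Icc 0 t) :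
    ‖T s ((A ^ j) x) m‖ ≤ M * ‖compressL H A‖ ^ j := by
  rw [← mul_apply_eq_comp, ((commute_generator hTadd hA hs.1).pow_right j).eq, mul_apply_eq_comp,
    pow_apply_eq_compressL_pow hT0 hTadd hA hm hH]
  calc _ ≤ ‖(compressL H A ^ j) (restrictL H (T s x))‖ := norm_le_pi_norm _ _
    _ ≤ ‖compressL H A‖ ^ j * M :=
        (norm_pow_apply_le _ _ j).trans (mul_le_mul_of_nonneg_left (hM s hs) (by positivity))
    _ = M * ‖compressL H A‖ ^ j := mul_comm _ _

open scoped Nat in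
include hT0 hTadd horbit hA in
theorem tendsto_sum_pow_div_factorial_smul_apply [Countable ι] [∀ i, CompleteSpace (X i)]
    (x : ∀ i, X i) (m : ι) {t : ℝ} (ht : 0 ≤ t) :
    Tendsto (fun N => ∑ k ∈ Finset.range N, (t ^ k / k !) • (A ^ k) x m) atTop (𝓝 (T t x m)) := by
  obtain ⟨H, hmH, hH⟩ := exists_finset_dependsOn_apply T horbit m 1
  obtain ⟨M, hM⟩ := (isCompact_Icc (a := 0) (b := t)).exists_bound_of_continuousOn
    ((restrictL H).continuous.comp_continuousOn ((horbit x).mono Icc_subset_Ici_self))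
  have hrem := norm_sub_sum_pow_div_factorial_smul_le (f := fun j s => T s ((A ^ j) x) m)
    (fun j => (continuous_apply m).comp_continuousOn ((horbit _).mono Icc_subset_Ici_self))
    (fun j s hs => by simpa only [pow_succ', mul_apply_eq_comp] using
      hasDerivWithinAt_apply_orbit hTadd hA hs.1 ((A ^ j) x) m)
    (fun j s hs => norm_apply_pow_orbit_le hT0 hTadd hA hmH hH hM j hs)
  rw [tendsto_iff_norm_sub_tendsto_zero]
  refine squeeze_zero (fun N => norm_nonneg _) (fun N => ?_) (by
    simpa using (FloorSemiring.tendsto_pow_div_factorial_atTop (‖compressL H A‖ * t)).const_mul M)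
  rw [norm_sub_rev]
  convert hrem N 0 ⟨ht, le_rfl⟩ using 1
  · simp [hT0]
  · ring

end Generator

end ProductSemigroup

end

/-- For a countable product `X = ∏ₙ Xₙ` of real Banach spaces,
every uniformly continuous semigroup on `X` has an everywhere defined
continuous linear generator `A`, and `T_t x = ∑_{k=0}^∞ (t^k/k!) • A^k x`. -/
theorem stmt15 {X : ℕ → Type*} [∀ n, NormedAddCommGroup (X n)]
    [∀ n, NormedSpace ℝ (X n)] [∀ n, CompleteSpace (X n)]
    (T : ℝ → (∀ n, X n) →L[ℝ] (∀ n, X n))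
    (hT0 : T 0 = ContinuousLinearMap.id ℝ (∀ n, X n))
    (hTadd : ∀ s t : ℝ, 0 ≤ s → 0 ≤ t → T (s + t) = (T s).comp (T t))
    (horbit : ∀ x : ∀ n, X n, ContinuousOn (fun t : ℝ => T t x) (Set.Ici 0))
    (hunif : ∀ B : Set (∀ n, X n), Bornology.IsVonNBounded ℝ B →
      TendstoUniformlyOn (fun (h : ℝ) (x : ∀ n, X n) => T h x)
        (fun x => x) (𝓝[>] 0) B) :
    ∃ A : (∀ n, X n) →L[ℝ] (∀ n, X n),
      (∀ x : ∀ n, X n,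
        Tendsto (fun h : ℝ => h⁻¹ • (T h x - x)) (𝓝[>] 0) (𝓝 (A x))) ∧
      ∀ x : ∀ n, X n, ∀ t : ℝ, 0 ≤ t →
        Tendsto (fun N : ℕ => ∑ k ∈ Finset.range N,
            (t ^ k / (Nat.factorial k : ℝ)) • (A ^ k) x) atTop (𝓝 (T t x)) := by
  obtain ⟨A, hA⟩ := ProductSemigroup.exists_generator hTadd horbit hunif
  refine ⟨A, hA, fun x t ht => tendsto_pi_nhds.2 fun m => ?_⟩
  simpa [Finset.sum_apply] using
    ProductSemigroup.tendsto_sum_pow_div_factorial_smul_apply hT0 hTadd horbit hA x m ht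
end
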